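/- arXiv:math/0206107 — 4 statements merged into one kernel-verified Lean document; each statement's English description precedes it below -/
import Mathlib

section
/- Let Y be an m-dimensional subspace of ℓ₁ represented by a central symmetric incarnating set K = {±yᵢ} ⊂ ℝᵐ, meaning ‖x‖_Y = (1/2) Σ_{yᵢ∈K} |⟨x, yᵢ⟩| for x ∈ ℝᵐ ≅ Y. Then the closed convex hull K′ of the set ςK = ∪_{u∈ℝᵐ} { Σ {yᵢ ∈ K : ⟨yᵢ, u⟩ > 0} } coincides with the unit ball B(Y*) of the dual space Y*. -/
open scoped RealInnerProductSpace

section helpers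
variable {E : Type*} [AddCommGroup E] [TopologicalSpace E] [IsTopologicalAddGroup E]

lemma myHasSum_elim {f g : ℕ → E} {a b : E} (hf : HasSum f a) (hg : HasSum g b) :
    HasSum (Sum.elim f g) (a + b) := by
  apply HasSum.add_isCompl Set.isCompl_range_inl_range_inr
  · exact ((Equiv.ofInjective Sum.inl Sum.inl_injective).hasSum_iff).mp
      (by simpa [Function.comp_def] using hf)
  · exact ((Equiv.ofInjective Sum.inr Sum.inr_injective).hasSum_iff).mp
      (by simpa [Function.comp_def] using hg)

lemma mySummable_elim {f g : ℕ → E} (hf : Summable f) (hg : Summable g) :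
    Summable (Sum.elim f g) := by
  obtain ⟨a, ha⟩ := hf; obtain ⟨b, hb⟩ := hg
  exact ⟨a + b, myHasSum_elim ha hb⟩

lemma myTsum_elim [T2Space E] {f g : ℕ → E} (hf : Summable f) (hg : Summable g) :
    ∑' z : ℕ ⊕ ℕ, Sum.elim f g z = (∑' i, f i) + ∑' i, g i :=
  (myHasSum_elim hf.hasSum hg.hasSum).tsum_eq

end helpers

/-- **The closed convex hull `K′` is the dual unit ball.**
Let `Y` be the `m`-dimensional space `ℝᵐ` equipped with the norm
`‖x‖_Y = (1/2) Σ_{z ∈ K} |⟨x, z⟩|`, where `K = {±yᵢ}` is a central symmetric set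
(indexed by `ℕ ⊕ ℕ` via `s = Sum.elim y (-y)`) spanning `ℝᵐ` with `Σ |||yᵢ||| < ∞`.
For `u ∈ ℝᵐ` let `x_u = Σ {z ∈ K : ⟨z, u⟩ > 0}`, let `ςK` be the set of all such
sums, and let `K′` be the closed convex hull of `ςK`.  Then `K′` coincides with the
dual unit ball `B(Y*) = {z : ⟨x, z⟩ ≤ ‖x‖_Y for all x}`. -/
theorem closed_convex_hull_eq_dual_ball
    (m : ℕ) (y : ℕ → EuclideanSpace ℝ (Fin m))
    (hspan : Submodule.span ℝ (Set.range y) = ⊤)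
    (hsum : Summable (fun i => ∑ j : Fin m, |⟪y i, EuclideanSpace.single j (1:ℝ)⟫|)) :
    closure (convexHull ℝ
        {v : EuclideanSpace ℝ (Fin m) | ∃ u : EuclideanSpace ℝ (Fin m),
          v = ∑' z : ℕ ⊕ ℕ,
            (if 0 < ⟪Sum.elim y (fun i => -(y i)) z, u⟫ then
              Sum.elim y (fun i => -(y i)) z else 0)}) =
      {z : EuclideanSpace ℝ (Fin m) | ∀ x : EuclideanSpace ℝ (Fin m),
        ⟪x, z⟫ ≤ (1/2) * ∑' w : ℕ ⊕ ℕ, |⟪x, Sum.elim y (fun i => -(y i)) w⟫|} := by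
  classical
  set s : ℕ ⊕ ℕ → EuclideanSpace ℝ (Fin m) := Sum.elim y (fun i => -(y i)) with hs
  -- summability of the norms of the yᵢ
  have hy : Summable (fun i => ‖y i‖) := by
    refine hsum.of_nonneg_of_le (fun i => norm_nonneg _) (fun i => ?_)
    have h1 : ∀ j, (⟪y i, EuclideanSpace.single j (1:ℝ)⟫ : ℝ) = y i j := by
      intro j; simp [EuclideanSpace.inner_single_right]
    calc ‖y i‖ = Real.sqrt (∑ j, |y i j| ^ 2) := by
          simpa [Real.norm_eq_abs] using EuclideanSpace.norm_eq (y i)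
      _ ≤ Real.sqrt ((∑ j, |y i j|) ^ 2) :=
          Real.sqrt_le_sqrt (Finset.sum_sq_le_sq_sum_of_nonneg (fun _ _ => abs_nonneg _))
      _ = ∑ j, |y i j| := Real.sqrt_sq (Finset.sum_nonneg fun _ _ => abs_nonneg _)
      _ = ∑ j, |⟪y i, EuclideanSpace.single j (1:ℝ)⟫| := by simp [h1]
  have hax : ∀ x : EuclideanSpace ℝ (Fin m), Summable (fun i => |⟪x, y i⟫|) := by
    intro x
    refine (hy.mul_left ‖x‖).of_nonneg_of_le (fun i => abs_nonneg _) (fun i => ?_)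
    exact abs_real_inner_le_norm x (y i)
  -- the norm identity
  have hN : ∀ x : EuclideanSpace ℝ (Fin m),
      (1/2 : ℝ) * ∑' w : ℕ ⊕ ℕ, |⟪x, s w⟫| = ∑' i, |⟪x, y i⟫| := by
    intro x
    have h2 : (fun w : ℕ ⊕ ℕ => |⟪x, s w⟫|)
        = Sum.elim (fun i => |⟪x, y i⟫|) (fun i => |⟪x, y i⟫|) := by
      funext w
      cases w with
      | inl i => simp [hs]
      | inr i => simp [hs, inner_neg_right]
    rw [h2, myTsum_elim (hax x) (hax x)]; ring
  -- summability of the selected vectors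
  have hvec : ∀ u : EuclideanSpace ℝ (Fin m),
      Summable (fun w : ℕ ⊕ ℕ => if 0 < ⟪s w, u⟫ then s w else 0) := by
    intro u
    have h1 : Summable (fun i : ℕ => if 0 < ⟪y i, u⟫ then y i else 0) := by
      refine Summable.of_norm (hy.of_nonneg_of_le (fun i => norm_nonneg _) (fun i => ?_))
      split <;> simp
    have h2 : Summable (fun i : ℕ => if 0 < ⟪-(y i), u⟫ then -(y i) else 0) := by
      refine Summable.of_norm (hy.of_nonneg_of_le (fun i => norm_nonneg _) (fun i => ?_))
      split <;> simp
    have h3 := mySummable_elim h1 h2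
    convert h3 using 1
    funext w; cases w <;> rfl
  -- scalar summabilities
  have hsc1 : ∀ u x : EuclideanSpace ℝ (Fin m),
      Summable (fun i : ℕ => (⟪x, if 0 < ⟪y i, u⟫ then y i else 0⟫ : ℝ)) := by
    intro u x
    refine Summable.of_norm ((hax x).of_nonneg_of_le (fun i => norm_nonneg _) (fun i => ?_))
    simp only [Real.norm_eq_abs]
    split <;> simp [abs_nonneg]
  have hsc2 : ∀ u x : EuclideanSpace ℝ (Fin m),
      Summable (fun i : ℕ => (⟪x, if 0 < ⟪-(y i), u⟫ then -(y i) else 0⟫ : ℝ)) := by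
    intro u x
    refine Summable.of_norm ((hax x).of_nonneg_of_le (fun i => norm_nonneg _) (fun i => ?_))
    simp only [Real.norm_eq_abs]
    split <;> simp [inner_neg_right, abs_nonneg]
  -- the inner product with x_u as a tsum of paired terms
  have hinner : ∀ u x : EuclideanSpace ℝ (Fin m),
      (⟪x, ∑' z : ℕ ⊕ ℕ, if 0 < ⟪s z, u⟫ then s z else 0⟫ : ℝ)
        = ∑' i : ℕ, ((⟪x, if 0 < ⟪y i, u⟫ then y i else 0⟫ : ℝ)
            + ⟪x, if 0 < ⟪-(y i), u⟫ then -(y i) else 0⟫) := by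
    intro u x
    have h0 : (⟪x, ∑' z : ℕ ⊕ ℕ, if 0 < ⟪s z, u⟫ then s z else 0⟫ : ℝ)
        = ∑' z : ℕ ⊕ ℕ, (⟪x, if 0 < ⟪s z, u⟫ then s z else 0⟫ : ℝ) := by
      simpa using ((innerSL ℝ x).map_tsum (hvec u))
    rw [h0]
    have h1 : (fun z : ℕ ⊕ ℕ => (⟪x, if 0 < ⟪s z, u⟫ then s z else 0⟫ : ℝ))
        = Sum.elim (fun i : ℕ => (⟪x, if 0 < ⟪y i, u⟫ then y i else 0⟫ : ℝ))
            (fun i : ℕ => (⟪x, if 0 < ⟪-(y i), u⟫ then -(y i) else 0⟫ : ℝ)) := by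
      funext w; cases w <;> rfl
    rw [h1, myTsum_elim (hsc1 u x) (hsc2 u x), ← Summable.tsum_add (hsc1 u x) (hsc2 u x)]
  -- termwise bound
  have hterm_le : ∀ u x : EuclideanSpace ℝ (Fin m), ∀ i : ℕ,
      (⟪x, if 0 < ⟪y i, u⟫ then y i else 0⟫ : ℝ)
        + ⟪x, if 0 < ⟪-(y i), u⟫ then -(y i) else 0⟫ ≤ |⟪x, y i⟫| := by
    intro u x i
    rcases lt_trichotomy (⟪y i, u⟫ : ℝ) 0 with h | h | h
    · have h1 : ¬ (0 < (⟪y i, u⟫ : ℝ)) := by linarith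
      have h2 : (0 : ℝ) < ⟪-(y i), u⟫ := by rw [inner_neg_left]; linarith
      rw [if_neg h1, if_pos h2, inner_zero_right, inner_neg_right, zero_add]
      exact neg_le_abs (⟪x, y i⟫ : ℝ)
    · have h1 : ¬ (0 < (⟪y i, u⟫ : ℝ)) := by simp [h]
      have h2 : ¬ ((0 : ℝ) < ⟪-(y i), u⟫) := by rw [inner_neg_left]; simp [h]
      rw [if_neg h1, if_neg h2, inner_zero_right, zero_add]
      exact abs_nonneg _
    · have h2 : ¬ ((0 : ℝ) < ⟪-(y i), u⟫) := by rw [inner_neg_left]; linarith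
      rw [if_pos h, if_neg h2, inner_zero_right, add_zero]
      exact le_abs_self _
  -- termwise equality at u = x
  have hterm_eq : ∀ x : EuclideanSpace ℝ (Fin m), ∀ i : ℕ,
      (⟪x, if 0 < ⟪y i, x⟫ then y i else 0⟫ : ℝ)
        + ⟪x, if 0 < ⟪-(y i), x⟫ then -(y i) else 0⟫ = |⟪x, y i⟫| := by
    intro x i
    have hc : (⟪y i, x⟫ : ℝ) = ⟪x, y i⟫ := real_inner_comm _ _
    rcases lt_trichotomy (⟪y i, x⟫ : ℝ) 0 with h | h | h
    · have h1 : ¬ (0 < (⟪y i, x⟫ : ℝ)) := by linarith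
      have h2 : (0 : ℝ) < ⟪-(y i), x⟫ := by rw [inner_neg_left]; linarith
      rw [if_neg h1, if_pos h2, inner_zero_right, inner_neg_right, zero_add,
        eq_comm, abs_eq_neg_self.2 (by rw [← hc]; linarith)]
    · have h1 : ¬ (0 < (⟪y i, x⟫ : ℝ)) := by simp [h]
      have h2 : ¬ ((0 : ℝ) < ⟪-(y i), x⟫) := by rw [inner_neg_left]; simp [h]
      rw [if_neg h1, if_neg h2, inner_zero_right, add_zero, ← hc, h, abs_zero]
    · have h2 : ¬ ((0 : ℝ) < ⟪-(y i), x⟫) := by rw [inner_neg_left]; linarith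
      rw [if_pos h, if_neg h2, inner_zero_right, add_zero, eq_comm,
        abs_eq_self.2 (by rw [← hc]; linarith)]
  -- dual ball bound for every x_u
  have hball : ∀ u x : EuclideanSpace ℝ (Fin m),
      (⟪x, ∑' z : ℕ ⊕ ℕ, if 0 < ⟪s z, u⟫ then s z else 0⟫ : ℝ)
        ≤ (1/2 : ℝ) * ∑' w : ℕ ⊕ ℕ, |⟪x, s w⟫| := by
    intro u x
    rw [hinner u x, hN x]
    exact Summable.tsum_le_tsum (hterm_le u x) ((hsc1 u x).add (hsc2 u x)) (hax x)
  apply Set.Subset.antisymm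
  · -- closure of convex hull ⊆ dual ball
    have hDeq : {z : EuclideanSpace ℝ (Fin m) | ∀ x : EuclideanSpace ℝ (Fin m),
        ⟪x, z⟫ ≤ (1/2) * ∑' w : ℕ ⊕ ℕ, |⟪x, s w⟫|}
        = ⋂ x : EuclideanSpace ℝ (Fin m),
            {z : EuclideanSpace ℝ (Fin m) | ⟪x, z⟫ ≤ (1/2) * ∑' w : ℕ ⊕ ℕ, |⟪x, s w⟫|} := by
      ext z; simp [Set.mem_iInter]
    have hDclosed : IsClosed {z : EuclideanSpace ℝ (Fin m) | ∀ x : EuclideanSpace ℝ (Fin m),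
        ⟪x, z⟫ ≤ (1/2) * ∑' w : ℕ ⊕ ℕ, |⟪x, s w⟫|} := by
      rw [hDeq]
      exact isClosed_iInter fun x =>
        isClosed_le (innerSL ℝ x).continuous continuous_const
    have hDconv : Convex ℝ {z : EuclideanSpace ℝ (Fin m) | ∀ x : EuclideanSpace ℝ (Fin m),
        ⟪x, z⟫ ≤ (1/2) * ∑' w : ℕ ⊕ ℕ, |⟪x, s w⟫|} := by
      intro a ha b hb p q hp hq hpq
      intro x
      have h1 := ha x
      have h2 := hb x
      simp only [inner_add_right, inner_smul_right]
      have h3 := mul_le_mul_of_nonneg_left h1 hp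
      have h4 := mul_le_mul_of_nonneg_left h2 hq
      have h5 : p * ((1:ℝ)/2 * ∑' (w : ℕ ⊕ ℕ), |⟪x, s w⟫|)
          + q * ((1:ℝ)/2 * ∑' (w : ℕ ⊕ ℕ), |⟪x, s w⟫|)
          = (1:ℝ)/2 * ∑' (w : ℕ ⊕ ℕ), |⟪x, s w⟫| := by
        rw [← add_mul, hpq, one_mul]
      linarith
    have hSD : {v : EuclideanSpace ℝ (Fin m) | ∃ u : EuclideanSpace ℝ (Fin m),
          v = ∑' z : ℕ ⊕ ℕ, (if 0 < ⟪s z, u⟫ then s z else 0)}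
        ⊆ {z : EuclideanSpace ℝ (Fin m) | ∀ x : EuclideanSpace ℝ (Fin m),
            ⟪x, z⟫ ≤ (1/2) * ∑' w : ℕ ⊕ ℕ, |⟪x, s w⟫|} := by
      rintro v ⟨u, rfl⟩ x
      exact hball u x
    exact closure_minimal (convexHull_min hSD hDconv) hDclosed
  · intro z hz
    by_contra hzc
    obtain ⟨f, c, hfc, hcz⟩ := geometric_hahn_banach_closed_point
      ((convex_convexHull ℝ _).closure) isClosed_closure hzc
    obtain ⟨v, hv⟩ := (InnerProductSpace.toDual ℝ (EuclideanSpace ℝ (Fin m))).surjective f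
    have hfv : ∀ w : EuclideanSpace ℝ (Fin m), f w = ⟪v, w⟫ := by
      intro w; rw [← hv]; simp [InnerProductSpace.toDual_apply_apply]
    have hxv : (∑' z : ℕ ⊕ ℕ, if 0 < ⟪s z, v⟫ then s z else 0)
        ∈ closure (convexHull ℝ {v' : EuclideanSpace ℝ (Fin m) |
            ∃ u : EuclideanSpace ℝ (Fin m),
              v' = ∑' z : ℕ ⊕ ℕ, (if 0 < ⟪s z, u⟫ then s z else 0)}) :=
      subset_closure (subset_convexHull ℝ _ ⟨v, rfl⟩)
    have h1 := hfc _ hxv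
    have heq : (⟪v, ∑' z : ℕ ⊕ ℕ, if 0 < ⟪s z, v⟫ then s z else 0⟫ : ℝ)
        = (1/2 : ℝ) * ∑' w : ℕ ⊕ ℕ, |⟪v, s w⟫| := by
      rw [hinner v v, hN v]
      exact tsum_congr (hterm_eq v)
    have h2 := hz v
    rw [hfv] at h1 hcz
    rw [heq] at h1
    linarith
end

section
/- The composition of two 2-absolutely summing operators is 1-absolutely summing: if u : X → Y and v : Y → Z are 2-absolutely summing, then v ∘ u : X → Z is 1-absolutely summing with π₁(v ∘ u) ≤ π₂(v) π₂(u). -/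
open scoped BigOperators

/-- The `n`-th Rademacher function `rₙ(t) = sign(sin(2^{n+1} π t))`,
realized as `(-1)^⌊2^{n+1} t⌋`. -/
noncomputable def rademacher (n : ℕ) (t : ℝ) : ℝ :=
  (-1 : ℝ) ^ ⌊(2 : ℝ) ^ (n + 1) * t⌋

/-- `X` has cotype 2 with constant `C`:
`(Σ‖xₙ‖²)^{1/2} ≤ C ∫₀¹ ‖Σ rₙ(t) xₙ‖ dt` for all finite families. -/
noncomputable def HasCotype2With (X : Type) [NormedAddCommGroup X] [NormedSpace ℝ X]
    (C : ℝ) : Prop :=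
  ∀ (n : ℕ) (x : Fin n → X),
    (∑ i, ‖x i‖ ^ (2 : ℝ)) ^ ((2 : ℝ)⁻¹) ≤
      C * ∫ t in (0 : ℝ)..1, ‖∑ i, rademacher i.1 t • x i‖

/-- `u` is `p`-absolutely summing with constant `lam`:
`(Σ‖u xᵢ‖^p)^{1/p} ≤ lam · sup_{‖f‖≤1} (Σ|f(xᵢ)|^p)^{1/p}` for all finite families. -/
noncomputable def IsPSummingWith {X Y : Type}
    [NormedAddCommGroup X] [NormedSpace ℝ X] [NormedAddCommGroup Y] [NormedSpace ℝ Y]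
    (p : ℝ) (u : X →L[ℝ] Y) (lam : ℝ) : Prop :=
  ∀ (n : ℕ) (x : Fin n → X),
    (∑ i, ‖u (x i)‖ ^ p) ^ p⁻¹ ≤
      lam * sSup {r : ℝ | ∃ f : X →L[ℝ] ℝ, ‖f‖ ≤ 1 ∧ r = (∑ i, |f (x i)| ^ p) ^ p⁻¹}

/-- The `p`-absolutely summing norm `π_p(u)`. -/
noncomputable def piNorm {X Y : Type}
    [NormedAddCommGroup X] [NormedSpace ℝ X] [NormedAddCommGroup Y] [NormedSpace ℝ Y]
    (p : ℝ) (u : X →L[ℝ] Y) : ℝ :=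
  sInf {lam : ℝ | 0 ≤ lam ∧ IsPSummingWith p u lam}

/-- The nuclear norm `ν₁(u) = inf {Σ‖fₙ‖‖yₙ‖ : u(x) = Σ fₙ(x) yₙ}`. -/
noncomputable def nu1 {X Y : Type}
    [NormedAddCommGroup X] [NormedSpace ℝ X] [NormedAddCommGroup Y] [NormedSpace ℝ Y]
    (u : X →L[ℝ] Y) : ℝ :=
  sInf {r : ℝ | ∃ (f : ℕ → (X →L[ℝ] ℝ)) (y : ℕ → Y),
    Summable (fun n => ‖f n‖ * ‖y n‖) ∧
    (∀ x, HasSum (fun n => f n x • y n) (u x)) ∧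
    r = ∑' n, ‖f n‖ * ‖y n‖}

/-- `u : X → Y` factors through an `L₁(μ)`-space with factorization constant `≤ r`:
there are a measure `μ` and operators `v : X → L₁(μ)`, `w : L₁(μ) → Y**` with
`k_Y ∘ u = w ∘ v` and `‖v‖‖w‖ ≤ r`. -/
def L1FactorableWith {X Y : Type}
    [NormedAddCommGroup X] [NormedSpace ℝ X] [NormedAddCommGroup Y] [NormedSpace ℝ Y]
    (u : X →L[ℝ] Y) (r : ℝ) : Prop :=
  ∃ (Ω : Type) (_ : MeasurableSpace Ω) (μ : MeasureTheory.Measure Ω)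
    (v : X →L[ℝ] MeasureTheory.Lp ℝ 1 μ)
    (w : MeasureTheory.Lp ℝ 1 μ →L[ℝ] StrongDual ℝ (StrongDual ℝ Y)),
    (∀ x, w (v x) = NormedSpace.inclusionInDoubleDual ℝ Y (u x)) ∧
      ‖v‖ * (ContinuousLinearMap.hasOpNorm (𝕜 := ℝ) (𝕜₂ := ℝ) (σ₁₂ := RingHom.id ℝ)
        (E := MeasureTheory.Lp ℝ 1 μ) (F := StrongDual ℝ (StrongDual ℝ Y))).norm w ≤ r

/-- `u` is `L₁`-factorable. -/
def L1Factorable {X Y : Type}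
    [NormedAddCommGroup X] [NormedSpace ℝ X] [NormedAddCommGroup Y] [NormedSpace ℝ Y]
    (u : X →L[ℝ] Y) : Prop :=
  ∃ r : ℝ, L1FactorableWith u r

open Metric Set
open scoped RealInnerProductSpace

noncomputable section PietschAux

variable {X Y : Type} [NormedAddCommGroup X] [NormedSpace ℝ X]
  [NormedAddCommGroup Y] [NormedSpace ℝ Y]

def Kball (X : Type) [NormedAddCommGroup X] [NormedSpace ℝ X] : Set (WeakDual ℝ X) :=
  WeakDual.toStrongDual ⁻¹' Metric.closedBall 0 1

instance : CompactSpace (Kball X) :=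
  isCompact_iff_compactSpace.mp (WeakDual.isCompact_closedBall (0 : StrongDual ℝ X) 1)

instance KballNonempty : Nonempty (Kball X) :=
  ⟨⟨0, by simp [Kball]⟩⟩

noncomputable def evC (z : X) : C(Kball X, ℝ) :=
  ⟨fun f => (f : WeakDual ℝ X) z, (WeakDual.eval_continuous z).comp continuous_subtype_val⟩

lemma evC_apply (z : X) (f : Kball X) : evC z f = (f : WeakDual ℝ X) z := rfl

lemma norm_kball_le (f : Kball X) : ‖WeakDual.toStrongDual (f : WeakDual ℝ X)‖ ≤ 1 := by
  have h2 : dist (WeakDual.toStrongDual (f : WeakDual ℝ X)) 0 ≤ 1 := f.2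
  rwa [dist_zero_right] at h2

lemma abs_evC_le (z : X) (f : Kball X) : |evC z f| ≤ ‖z‖ := by
  set g := WeakDual.toStrongDual (f : WeakDual ℝ X)
  calc |evC z f| = ‖g z‖ := rfl
    _ ≤ ‖g‖ * ‖z‖ := g.le_opNorm z
    _ ≤ 1 * ‖z‖ := mul_le_mul_of_nonneg_right (norm_kball_le f) (norm_nonneg z)
    _ = ‖z‖ := one_mul _

/-- The function appearing in the Pietsch separation argument. -/
noncomputable def pFun (u : X →L[ℝ] Y) (A : ℝ) {m : ℕ} (y : Fin m → X) : C(Kball X, ℝ) :=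
  ∑ j, ((ContinuousMap.const _ (‖u (y j)‖ ^ 2)) - (A ^ 2) • (evC (y j) * evC (y j)))

lemma pFun_apply (u : X →L[ℝ] Y) (A : ℝ) {m : ℕ} (y : Fin m → X) (f : Kball X) :
    pFun u A y f = ∑ j, (‖u (y j)‖ ^ 2 - A ^ 2 * (evC (y j) f) ^ 2) := by
  simp [pFun, sq]


lemma pFun_add (u : X →L[ℝ] Y) (A : ℝ) {m m' : ℕ} (y : Fin m → X) (y' : Fin m' → X) :
    pFun u A y + pFun u A y' = pFun u A (Fin.append y y') := by
  ext f
  simp only [ContinuousMap.add_apply, pFun_apply]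
  rw [Fin.sum_univ_add]
  simp [Fin.append_left, Fin.append_right]

lemma pFun_smul (u : X →L[ℝ] Y) (A : ℝ) {m : ℕ} (y : Fin m → X) {t : ℝ} (ht : 0 ≤ t) :
    t • pFun u A y = pFun u A (fun j => Real.sqrt t • y j) := by
  ext f
  simp only [ContinuousMap.smul_apply, smul_eq_mul, pFun_apply]
  have ht2 : Real.sqrt t ^ 2 = t := Real.sq_sqrt ht
  rw [Finset.mul_sum]
  refine Finset.sum_congr rfl fun j _ => ?_
  have e1 : ‖u (Real.sqrt t • y j)‖ ^ 2 = t * ‖u (y j)‖ ^ 2 := by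
    rw [map_smul, norm_smul, Real.norm_eq_abs, abs_of_nonneg (Real.sqrt_nonneg t),
      mul_pow, ht2]
  have e2 : (evC (Real.sqrt t • y j) f) ^ 2 = t * (evC (y j) f) ^ 2 := by
    simp only [evC_apply, map_smul, smul_eq_mul, mul_pow, ht2]
  rw [e1, e2]; ring

lemma le_zero_of_forall_pos {C a : ℝ} (h : ∀ ε > (0:ℝ), a ≤ ε * C) : a ≤ 0 := by
  rcases le_or_gt C 0 with hC | hC
  · have := h 1 one_pos
    nlinarith
  · have h' : ∀ δ > (0:ℝ), a ≤ 0 + δ := by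
      intro δ hδ
      have := h (δ / C) (div_pos hδ hC)
      rw [div_mul_cancel₀ _ (ne_of_gt hC)] at this
      linarith
    exact le_of_forall_pos_le_add h'

theorem pietsch_domination (u : X →L[ℝ] Y) {A : ℝ} (hA0 : 0 ≤ A)
    (hA : IsPSummingWith 2 u A) :
    ∃ φ : C(Kball X, ℝ) →L[ℝ] ℝ,
      (∀ h : C(Kball X, ℝ), (∀ f, 0 ≤ h f) → 0 ≤ φ h) ∧
      φ 1 = 1 ∧
      ∀ z : X, ‖u z‖ ^ 2 ≤ A ^ 2 * φ (evC z * evC z) := by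
  classical
  -- the open convex cone of strictly positive functions
  set P : Set C(Kball X, ℝ) := {G | ∀ f, 0 < G f} with hP
  -- the convex set from summing data
  set F : Set C(Kball X, ℝ) := {G | ∃ (m : ℕ) (y : Fin m → X), G = pFun u A y} with hF
  have hPopen : IsOpen P := by
    rw [isOpen_iff_forall_mem_open]
    intro G hG
    obtain ⟨f₀, -, hf₀'⟩ := isCompact_univ.exists_isMinOn univ_nonempty
      (G.continuous.continuousOn (s := univ))
    have hf₀ : ∀ f, G f₀ ≤ G f := fun f => hf₀' (mem_univ f)
    refine ⟨Metric.ball G (G f₀), ?_, Metric.isOpen_ball, ?_⟩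
    · intro G' hG'
      intro f
      have h1 : |G' f - G f| ≤ ‖G' - G‖ := by
        simpa using (G' - G).norm_coe_le_norm f
      have h2 : ‖G' - G‖ < G f₀ := by simpa [dist_eq_norm] using hG'
      have := hf₀ f
      nlinarith [abs_le.mp h1]
    · simpa [Metric.mem_ball] using hG f₀
  have hPconv : Convex ℝ P := by
    intro a ha b hb s t hs ht hst
    intro f
    rcases eq_or_lt_of_le hs with h | h
    · simp only [← h, zero_smul, zero_add, one_smul]
      have : t = 1 := by linarith
      simpa [this] using hb f
    · have := hb f
      have := ha f
      have : 0 ≤ t * b f := mul_nonneg ht (le_of_lt (hb f))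
      have : 0 < s * a f := mul_pos h (ha f)
      simp only [ContinuousMap.add_apply, ContinuousMap.smul_apply, smul_eq_mul]
      linarith
  have hFconv : Convex ℝ F := by
    rintro a ⟨m, y, rfl⟩ b ⟨m', y', rfl⟩ s t hs ht hst
    refine ⟨m + m', Fin.append (fun j => Real.sqrt s • y j) (fun j => Real.sqrt t • y' j), ?_⟩
    ext f
    simp only [ContinuousMap.add_apply, ContinuousMap.smul_apply, smul_eq_mul, pFun_apply]
    rw [Fin.sum_univ_add]
    simp only [Fin.append_left, Fin.append_right]
    have hs2 : Real.sqrt s ^ 2 = s := Real.sq_sqrt hs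
    have ht2 : Real.sqrt t ^ 2 = t := Real.sq_sqrt ht
    have e1 : ∀ j, ‖u (Real.sqrt s • y j)‖ ^ 2 = s * ‖u (y j)‖ ^ 2 := by
      intro j
      rw [map_smul, norm_smul, Real.norm_eq_abs, abs_of_nonneg (Real.sqrt_nonneg s),
        mul_pow, hs2]
    have e1' : ∀ j, ‖u (Real.sqrt t • y' j)‖ ^ 2 = t * ‖u (y' j)‖ ^ 2 := by
      intro j
      rw [map_smul, norm_smul, Real.norm_eq_abs, abs_of_nonneg (Real.sqrt_nonneg t),
        mul_pow, ht2]
    have e2 : ∀ j, (evC (Real.sqrt s • y j) f) ^ 2 = s * (evC (y j) f) ^ 2 := by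
      intro j
      simp only [evC_apply, map_smul, smul_eq_mul, mul_pow, hs2]
    have e2' : ∀ j, (evC (Real.sqrt t • y' j) f) ^ 2 = t * (evC (y' j) f) ^ 2 := by
      intro j
      simp only [evC_apply, map_smul, smul_eq_mul, mul_pow, ht2]
    have L : ∑ j, (‖u (Real.sqrt s • y j)‖ ^ 2 - A ^ 2 * (evC (Real.sqrt s • y j) f) ^ 2)
        = s * ∑ j, (‖u (y j)‖ ^ 2 - A ^ 2 * (evC (y j) f) ^ 2) := by
      rw [Finset.mul_sum]
      exact Finset.sum_congr rfl fun j _ => by rw [e1 j, e2 j]; ring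
    have R : ∑ j, (‖u (Real.sqrt t • y' j)‖ ^ 2 - A ^ 2 * (evC (Real.sqrt t • y' j) f) ^ 2)
        = t * ∑ j, (‖u (y' j)‖ ^ 2 - A ^ 2 * (evC (y' j) f) ^ 2) := by
      rw [Finset.mul_sum]
      exact Finset.sum_congr rfl fun j _ => by rw [e1' j, e2' j]; ring
    rw [L, R]
  -- disjointness
  have hdisj : Disjoint P F := by
    rw [Set.disjoint_left]
    rintro G hGP ⟨m, y, rfl⟩
    -- maximize the weak-square-sum over the compact ball
    set q : C(Kball X, ℝ) := ∑ j, (evC (y j) * evC (y j)) with hq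
    have hq_apply : ∀ f, q f = ∑ j, (evC (y j) f) ^ 2 := by
      intro f; simp [hq, sq]
    obtain ⟨f₀, -, hf₀'⟩ := isCompact_univ.exists_isMaxOn univ_nonempty
      (q.continuous.continuousOn (s := univ))
    have hf₀ : ∀ f, q f ≤ q f₀ := fun f => hf₀' (mem_univ f)
    set M := q f₀ with hM
    have hM0 : 0 ≤ M := by
      rw [hM, hq_apply]
      exact Finset.sum_nonneg fun j _ => sq_nonneg _
    set Sm := ∑ j, ‖u (y j)‖ ^ 2 with hSm
    -- from the summing hypothesis
    have hsum := hA m y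
    set W := sSup {r : ℝ | ∃ f : X →L[ℝ] ℝ, ‖f‖ ≤ 1 ∧
      r = (∑ i, |f (y i)| ^ (2:ℝ)) ^ (2:ℝ)⁻¹} with hW
    have hW0 : 0 ≤ W := by
      apply Real.sSup_nonneg
      rintro r ⟨f, hf, rfl⟩
      exact Real.rpow_nonneg
        (Finset.sum_nonneg fun i _ => Real.rpow_nonneg (abs_nonneg _) _) _
    have hWM : W ≤ M ^ (2:ℝ)⁻¹ := by
      apply Real.sSup_le _ (Real.rpow_nonneg hM0 _)
      rintro r ⟨f, hf, rfl⟩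
      have hfK : ((f : WeakDual ℝ X)) ∈ Kball X := by
        simp only [Kball, mem_preimage, mem_closedBall, dist_zero_right]
        exact Set.mem_preimage.mpr (mem_closedBall_zero_iff.mpr hf)
      have : (∑ i, |f (y i)| ^ (2:ℝ)) = q ⟨f, hfK⟩ := by
        rw [hq_apply]
        refine Finset.sum_congr rfl fun i _ => ?_
        rw [show ((2:ℝ)) = ((2:ℕ):ℝ) by norm_num, Real.rpow_natCast, sq_abs]
        rfl
      rw [this]
      exact Real.rpow_le_rpow (by
        rw [hq_apply]; exact Finset.sum_nonneg fun j _ => sq_nonneg _)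
        (hf₀ _) (by norm_num)
    have hSm2 : (∑ i, ‖u (y i)‖ ^ (2:ℝ)) = Sm := by
      refine Finset.sum_congr rfl fun i _ => ?_
      rw [show ((2:ℝ)) = ((2:ℕ):ℝ) by norm_num, Real.rpow_natCast]
    rw [hSm2] at hsum
    have hSm0 : 0 ≤ Sm := Finset.sum_nonneg fun j _ => sq_nonneg _
    have hSmle : Sm ≤ A ^ 2 * M := by
      have h1 : Sm ^ (2:ℝ)⁻¹ ≤ A * W := hsum
      have h2 : (Sm ^ (2:ℝ)⁻¹) ^ 2 ≤ (A * W) ^ 2 := by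
        apply pow_le_pow_left₀ (Real.rpow_nonneg hSm0 _) h1
      have h3 : (Sm ^ (2:ℝ)⁻¹) ^ 2 = Sm := by
        rw [← Real.rpow_natCast (Sm ^ (2:ℝ)⁻¹) 2, ← Real.rpow_mul hSm0]
        norm_num
      have h4 : (A * W) ^ 2 ≤ A ^ 2 * M := by
        have hWM2 : W ^ 2 ≤ M := by
          have := pow_le_pow_left₀ hW0 hWM 2
          rwa [← Real.rpow_natCast (M ^ (2:ℝ)⁻¹) 2, ← Real.rpow_mul hM0,
            (by norm_num : (2:ℝ)⁻¹ * ((2:ℕ):ℝ) = 1), Real.rpow_one] at this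
        calc (A * W) ^ 2 = A ^ 2 * W ^ 2 := by ring
          _ ≤ A ^ 2 * M := by nlinarith [sq_nonneg A]
      linarith
    -- strict positivity at the maximizer gives a contradiction
    have hstrict := hGP f₀
    rw [pFun_apply] at hstrict
    have : Sm - A ^ 2 * M = ∑ j, (‖u (y j)‖ ^ 2 - A ^ 2 * (evC (y j) f₀) ^ 2) := by
      rw [hSm, hM, hq_apply, Finset.sum_sub_distrib, Finset.mul_sum]
    linarith [hstrict, this ▸ (by linarith : Sm - A ^ 2 * M ≤ 0)]
  -- separation
  obtain ⟨φ, c, hφP, hφF⟩ := geometric_hahn_banach_open hPconv hPopen hFconv hdisj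
  have h0F : (0 : C(Kball X, ℝ)) ∈ F := by
    refine ⟨0, Fin.elim0, ?_⟩
    ext f
    simp [pFun_apply]
  have hc0 : c ≤ 0 := by simpa using hφF 0 h0F
  have hφneg : ∀ h : C(Kball X, ℝ), (∀ f, 0 ≤ h f) → φ h ≤ 0 := by
    intro h hh
    apply le_zero_of_forall_pos (C := -(φ 1))
    intro ε hε
    have hmem : h + ε • (1 : C(Kball X, ℝ)) ∈ P := by
      intro f
      have := hh f
      simp only [ContinuousMap.add_apply, ContinuousMap.smul_apply,
        ContinuousMap.one_apply, smul_eq_mul, mul_one]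
      linarith
    have := hφP _ hmem
    rw [map_add, map_smul] at this
    simp only [smul_eq_mul] at this
    nlinarith
  have hφ1 : φ 1 < 0 := lt_of_lt_of_le (hφP 1 (fun f => one_pos)) hc0
  -- the positive functional
  set ψ : C(Kball X, ℝ) →L[ℝ] ℝ := -φ with hψ
  have hψpos : ∀ h : C(Kball X, ℝ), (∀ f, 0 ≤ h f) → 0 ≤ ψ h := by
    intro h hh
    have := hφneg h hh
    simp only [hψ, ContinuousLinearMap.neg_apply]
    linarith
  have hψ1 : 0 < ψ 1 := by
    simp only [hψ, ContinuousLinearMap.neg_apply]; linarith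
  have hψdom : ∀ z : X, ‖u z‖ ^ 2 * ψ 1 ≤ A ^ 2 * ψ (evC z * evC z) := by
    intro z
    set Fz := pFun u A (fun _ : Fin 1 => z) with hFz
    have hFz_mem : ∀ t > (0:ℝ), t • Fz ∈ F := by
      intro t ht
      exact ⟨1, fun _ => Real.sqrt t • z, pFun_smul u A _ (le_of_lt ht)⟩
    have hφFz : 0 ≤ φ Fz := by
      by_contra hneg
      push_neg at hneg
      set t := (c - 1) / (φ Fz) with htdef
      have ht : 0 < t := div_pos_of_neg_of_neg (by linarith) hneg
      have := hφF _ (hFz_mem t ht)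
      rw [map_smul, smul_eq_mul, htdef, div_mul_cancel₀ _ (ne_of_lt hneg)] at this
      linarith
    have hexp : Fz = ‖u z‖ ^ 2 • (1 : C(Kball X, ℝ)) - A ^ 2 • (evC z * evC z) := by
      ext f
      simp only [hFz, pFun_apply, Finset.sum_const, Finset.card_univ, Fintype.card_fin,
        one_smul, ContinuousMap.sub_apply, ContinuousMap.smul_apply, ContinuousMap.one_apply,
        ContinuousMap.mul_apply, smul_eq_mul, Fin.sum_univ_one]
      ring
    have : 0 ≤ φ (‖u z‖ ^ 2 • (1 : C(Kball X, ℝ)) - A ^ 2 • (evC z * evC z)) := by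
      rw [← hexp]; exact hφFz
    rw [map_sub, map_smul, map_smul] at this
    simp only [smul_eq_mul] at this
    simp only [hψ, ContinuousLinearMap.neg_apply]
    nlinarith
  refine ⟨(ψ 1)⁻¹ • ψ, ?_, ?_, ?_⟩
  · intro h hh
    simp only [ContinuousLinearMap.smul_apply, smul_eq_mul]
    exact mul_nonneg (inv_nonneg.mpr (le_of_lt hψ1)) (hψpos h hh)
  · simp only [ContinuousLinearMap.smul_apply, smul_eq_mul]
    exact inv_mul_cancel₀ (ne_of_gt hψ1)
  · intro z
    have h5 := hψdom z
    simp only [ContinuousLinearMap.smul_apply, smul_eq_mul]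
    rw [show A ^ 2 * ((ψ 1)⁻¹ * ψ (evC z * evC z))
        = (A ^ 2 * ψ (evC z * evC z)) / ψ 1 by rw [div_eq_mul_inv]; ring, le_div_iff₀ hψ1]
    linarith


section PosFun
variable {K : Type} [TopologicalSpace K] [CompactSpace K]

noncomputable def absC (h : C(K, ℝ)) : C(K, ℝ) := ⟨fun f => |h f|, h.continuous.abs⟩

lemma absC_apply (h : C(K, ℝ)) (f : K) : absC h f = |h f| := rfl

noncomputable def sqrtC (h : C(K, ℝ)) : C(K, ℝ) :=
  ⟨fun f => Real.sqrt (h f), Real.continuous_sqrt.comp h.continuous⟩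

lemma sqrtC_apply (h : C(K, ℝ)) (f : K) : sqrtC h f = Real.sqrt (h f) := rfl

variable (φ : C(K, ℝ) →L[ℝ] ℝ)

lemma phi_mono (hpos : ∀ h : C(K, ℝ), (∀ f, 0 ≤ h f) → 0 ≤ φ h)
    (h h' : C(K, ℝ)) (hle : ∀ f, h f ≤ h' f) : φ h ≤ φ h' := by
  have h1 : 0 ≤ φ (h' - h) := hpos _ (fun f => by
    simp only [ContinuousMap.sub_apply]; linarith [hle f])
  rw [map_sub] at h1
  linarith

lemma phi_cs (hpos : ∀ h : C(K, ℝ), (∀ f, 0 ≤ h f) → 0 ≤ φ h)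
    (a b : C(K, ℝ)) : (φ (a * b)) ^ 2 ≤ φ (a * a) * φ (b * b) := by
  have key : ∀ t : ℝ, 0 ≤ φ (a * a) * (t * t) + (2 * φ (a * b)) * t + φ (b * b) := by
    intro t
    have expand : (t • a + b) * (t • a + b)
        = (t * t) • (a * a) + (2 * t) • (a * b) + b * b := by
      ext f
      simp only [ContinuousMap.mul_apply, ContinuousMap.add_apply, ContinuousMap.smul_apply,
        smul_eq_mul]
      ring
    have h0 : 0 ≤ φ ((t • a + b) * (t • a + b)) :=
      hpos _ (fun f => by simpa [ContinuousMap.mul_apply] using mul_self_nonneg _)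
    rw [expand, map_add, map_add, map_smul, map_smul] at h0
    simp only [smul_eq_mul] at h0
    nlinarith
  have hd := discrim_le_zero key
  rw [discrim] at hd
  nlinarith

lemma phi_abs (hpos : ∀ h : C(K, ℝ), (∀ f, 0 ≤ h f) → 0 ≤ φ h)
    (h : C(K, ℝ)) : |φ h| ≤ φ (absC h) := by
  rw [abs_le]
  constructor
  · have := phi_mono φ hpos (-h) (absC h) (fun f => by
      simp only [ContinuousMap.neg_apply, absC_apply]; exact neg_le_abs _)
    rw [map_neg] at this
    linarith
  · exact phi_mono φ hpos h (absC h) (fun f => le_abs_self _)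

end PosFun


set_option maxHeartbeats 1000000 in
theorem gram_riesz (u : X →L[ℝ] Y) {A : ℝ}
    (φ : C(Kball X, ℝ) →L[ℝ] ℝ)
    (hpos : ∀ h : C(Kball X, ℝ), (∀ f, 0 ≤ h f) → 0 ≤ φ h)
    (hdom : ∀ z : X, ‖u z‖ ^ 2 ≤ A ^ 2 * φ (evC z * evC z))
    {n : ℕ} (x : Fin n → X) (g : Y →L[ℝ] ℝ) (hg : ‖g‖ ≤ 1) :
    ∃ w : C(Kball X, ℝ), (∀ i, g (u (x i)) = φ (evC (x i) * w)) ∧ φ (w * w) ≤ A ^ 2 := by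
  classical
  set S : EuclideanSpace ℝ (Fin n) → C(Kball X, ℝ) := fun c => ∑ j, c j • evC (x j) with hS
  have hS_apply : ∀ (c : EuclideanSpace ℝ (Fin n)) (f : Kball X), S c f = ∑ j, c j * evC (x j) f := by
    intro c f; simp [hS]
  set zfun : EuclideanSpace ℝ (Fin n) → X := fun c => ∑ j, c j • x j with hzfun
  have hSz : ∀ c : EuclideanSpace ℝ (Fin n), evC (zfun c) = S c := by
    intro c
    ext f
    rw [hS_apply, evC_apply, hzfun]
    simp only [map_sum, map_smul, smul_eq_mul]
    rfl
  have hinn : ∀ a b : EuclideanSpace ℝ (Fin n), ⟪a, b⟫ = ∑ i, a i * b i := by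
    intro a b
    simp [PiLp.inner_apply, RCLike.inner_apply]
    exact Finset.sum_congr rfl fun i _ => mul_comm _ _
  have hSadd : ∀ c d : EuclideanSpace ℝ (Fin n), S (c + d) = S c + S d := by
    intro c d
    ext f
    simp only [hS_apply, ContinuousMap.add_apply, PiLp.add_apply, add_mul,
      Finset.sum_add_distrib]
  have hSsmul : ∀ (t : ℝ) (c : EuclideanSpace ℝ (Fin n)), S (t • c) = t • S c := by
    intro t c
    ext f
    simp only [hS_apply, ContinuousMap.smul_apply, PiLp.smul_apply, smul_eq_mul,
      Finset.mul_sum, mul_assoc]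
  set T : EuclideanSpace ℝ (Fin n) →ₗ[ℝ] EuclideanSpace ℝ (Fin n) :=
    { toFun := fun c => WithLp.toLp 2 (fun i => φ (evC (x i) * S c) : Fin n → ℝ)
      map_add' := by
        intro c d
        ext i
        simp only [hSadd, mul_add, map_add]
        rfl
      map_smul' := by
        intro t c
        ext i
        simp only [hSsmul, smul_eq_mul, RingHom.id_apply]
        have : evC (x i) * (t • S c) = t • (evC (x i) * S c) := by
          ext f; simp only [ContinuousMap.mul_apply, ContinuousMap.smul_apply, smul_eq_mul]; ring
        rw [this, map_smul]
        rfl } with hT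
  have hT_apply : ∀ (c : EuclideanSpace ℝ (Fin n)) (i : Fin n), T c i = φ (evC (x i) * S c) := fun c i => rfl
  have hTinner : ∀ c d : EuclideanSpace ℝ (Fin n), ⟪T c, d⟫ = φ (S d * S c) := by
    intro c d
    rw [hinn]
    have : ∀ i, T c i * d i = φ ((d i • evC (x i)) * S c) := by
      intro i
      rw [hT_apply]
      have : (d i • evC (x i)) * S c = d i • (evC (x i) * S c) := by
        ext f; simp only [ContinuousMap.mul_apply, ContinuousMap.smul_apply, smul_eq_mul]; ring
      rw [this, map_smul, smul_eq_mul, mul_comm]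
    rw [Finset.sum_congr rfl fun i _ => this i, ← map_sum]
    congr 1
    ext f
    simp only [ContinuousMap.sum_apply, ContinuousMap.mul_apply, ContinuousMap.smul_apply,
      smul_eq_mul, hS_apply, Finset.sum_mul]
  have hsym : ∀ c d : EuclideanSpace ℝ (Fin n), ⟪T c, d⟫ = ⟪T d, c⟫ := by
    intro c d
    rw [hTinner, hTinner, mul_comm]
  set R : Submodule ℝ (EuclideanSpace ℝ (Fin n)) := LinearMap.range T with hR
  set b : EuclideanSpace ℝ (Fin n) := WithLp.toLp 2 (fun i => g (u (x i)) : Fin n → ℝ) with hb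
  set p : EuclideanSpace ℝ (Fin n) := (R.orthogonalProjectionOnto b : EuclideanSpace ℝ (Fin n)) with hp
  set q : EuclideanSpace ℝ (Fin n) := b - p with hq
  have hqR : q ∈ Rᗮ := R.sub_starProjection_mem_orthogonal b
  have hpR : p ∈ R := (R.orthogonalProjectionOnto b).2
  have hTq : T q = 0 := by
    have h1 : ⟪T q, T q⟫ = 0 := by
      rw [hsym]
      exact (Submodule.mem_orthogonal R q).mp hqR (T (T q)) (LinearMap.mem_range_self T _)
    exact inner_self_eq_zero.mp h1
  have hφq : φ (S q * S q) = 0 := by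
    have : ⟪T q, q⟫ = φ (S q * S q) := hTinner q q
    rw [hTq] at this
    simpa using this.symm
  have huzq : u (zfun q) = 0 := by
    have h1 := hdom (zfun q)
    rw [hSz, hφq, mul_zero] at h1
    have := norm_nonneg (u (zfun q))
    have hn : ‖u (zfun q)‖ = 0 := by nlinarith
    exact norm_eq_zero.mp hn
  have hgz : ∀ c : EuclideanSpace ℝ (Fin n), ∑ i, b i * c i = g (u (zfun c)) := by
    intro c
    rw [hzfun]
    simp only [map_sum, map_smul, smul_eq_mul, hb]
    exact Finset.sum_congr rfl fun i _ => mul_comm _ _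
  have hbq : ⟪b, q⟫ = 0 := by
    rw [hinn, hgz, huzq, map_zero]
  have hq0 : q = 0 := by
    have h2 : ⟪p, q⟫ = 0 := (Submodule.mem_orthogonal R q).mp hqR p hpR
    have h3 : ⟪q, q⟫ = 0 := by
      have : ⟪b, q⟫ = ⟪p, q⟫ + ⟪q, q⟫ := by
        rw [← inner_add_left]
        congr 1
        rw [hq]; abel
      rw [hbq, h2] at this
      linarith
    exact inner_self_eq_zero.mp h3
  have hbR : b ∈ R := by
    have : b = p := by rw [← sub_eq_zero, ← hq, hq0]
    rw [this]; exact hpR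
  obtain ⟨c, hc⟩ := hbR
  refine ⟨S c, ?_, ?_⟩
  · intro i
    have h6 : T c i = b i := by rw [hc]
    rw [hT_apply] at h6
    rw [h6, hb]
  · have h1 : φ (S c * S c) = ⟪T c, c⟫ := (hTinner c c).symm
    have h2 : ⟪T c, c⟫ = g (u (zfun c)) := by
      rw [hc, hinn, hgz]
    have ht0 : 0 ≤ φ (S c * S c) := hpos _ (fun f => by
      simp only [ContinuousMap.mul_apply]; exact mul_self_nonneg _)
    have h3 : φ (S c * S c) ≤ ‖u (zfun c)‖ := by
      rw [h1, h2]
      calc g (u (zfun c)) ≤ |g (u (zfun c))| := le_abs_self _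
        _ ≤ ‖g‖ * ‖u (zfun c)‖ := g.le_opNorm _
        _ ≤ 1 * ‖u (zfun c)‖ := mul_le_mul_of_nonneg_right hg (norm_nonneg _)
        _ = ‖u (zfun c)‖ := one_mul _
    have h4 : ‖u (zfun c)‖ ^ 2 ≤ A ^ 2 * φ (S c * S c) := by
      have := hdom (zfun c)
      rwa [hSz] at this
    nlinarith [norm_nonneg (u (zfun c))]


end PietschAux

section KeyLemma

variable {X Y Z : Type} [NormedAddCommGroup X] [NormedSpace ℝ X]
  [NormedAddCommGroup Y] [NormedSpace ℝ Y]
  [NormedAddCommGroup Z] [NormedSpace ℝ Z]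

set_option maxHeartbeats 1000000 in
theorem comp_summing_key (u : X →L[ℝ] Y) (v : Y →L[ℝ] Z) {A B : ℝ}
    (hA0 : 0 ≤ A) (hB0 : 0 ≤ B)
    (hA : IsPSummingWith 2 u A) (hB : IsPSummingWith 2 v B) :
    IsPSummingWith 1 (v.comp u) (B * A) := by
  classical
  intro n x
  simp only [Real.rpow_one, inv_one]
  set Sset : Set ℝ := {r : ℝ | ∃ f : X →L[ℝ] ℝ, ‖f‖ ≤ 1 ∧ r = ∑ i, |f (x i)|} with hSset
  set S : ℝ := sSup Sset with hSdef
  have hbdd : BddAbove Sset := by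
    refine ⟨∑ i, ‖x i‖, ?_⟩
    rintro r ⟨f, hf, rfl⟩
    apply Finset.sum_le_sum
    intro i _
    calc |f (x i)| ≤ ‖f‖ * ‖x i‖ := f.le_opNorm _
      _ ≤ 1 * ‖x i‖ := mul_le_mul_of_nonneg_right hf (norm_nonneg _)
      _ = ‖x i‖ := one_mul _
  have hS0 : 0 ≤ S := Real.sSup_nonneg (by
    rintro r ⟨f, hf, rfl⟩
    exact Finset.sum_nonneg fun i _ => abs_nonneg _)
  have hpointK : ∀ f : Kball X, ∑ i, |evC (x i) f| ≤ S := by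
    intro f
    apply le_csSup hbdd
    exact ⟨WeakDual.toStrongDual (f : WeakDual ℝ X), norm_kball_le f, rfl⟩
  obtain ⟨φ, hpos, hone, hdom⟩ := pietsch_domination u hA0 hA
  set m : Fin n → ℝ := fun i => φ (absC (evC (x i))) with hm
  have hm0 : ∀ i, 0 ≤ m i := fun i => hpos _ (fun f => abs_nonneg _)
  have hmsum : ∑ i, m i ≤ S := by
    have e1 : ∑ i, m i = φ (∑ i, absC (evC (x i))) := by rw [map_sum]
    have e2 : φ (∑ i, absC (evC (x i))) ≤ φ (S • (1 : C(Kball X, ℝ))) := by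
      apply phi_mono φ hpos
      intro f
      simp only [ContinuousMap.sum_apply, ContinuousMap.smul_apply, ContinuousMap.one_apply,
        smul_eq_mul, mul_one, absC_apply]
      exact hpointK f
    rw [e1]
    calc φ (∑ i, absC (evC (x i))) ≤ φ (S • 1) := e2
      _ = S * φ 1 := by rw [map_smul]; rfl
      _ = S := by rw [hone, mul_one]
  -- the ε-perturbed estimate
  have key : ∀ ε > (0:ℝ), (∑ i, ‖v (u (x i))‖) ^ 2
      ≤ (S + n * ε) * (B ^ 2 * (S * A ^ 2)) := by
    intro ε hε
    have hme : ∀ i, 0 < m i + ε := fun i => by linarith [hm0 i]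
    have hsq : ∀ i, 0 < Real.sqrt (m i + ε) := fun i => Real.sqrt_pos.mpr (hme i)
    set y : Fin n → Y := fun i => (Real.sqrt (m i + ε))⁻¹ • (u (x i)) with hy
    have hvy : ∀ i, ‖v (y i)‖ ^ 2 = ‖v (u (x i))‖ ^ 2 / (m i + ε) := by
      intro i
      rw [hy]
      simp only [map_smul, norm_smul, Real.norm_eq_abs, abs_inv,
        abs_of_nonneg (Real.sqrt_nonneg _)]
      rw [mul_pow, inv_pow, Real.sq_sqrt (le_of_lt (hme i)), div_eq_inv_mul]
    -- Cauchy-Schwarz step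
    have hcs : (∑ i, ‖v (u (x i))‖) ^ 2
        ≤ (∑ i, (m i + ε)) * (∑ i, ‖v (u (x i))‖ ^ 2 / (m i + ε)) := by
      have e : ∀ i, ‖v (u (x i))‖
          = Real.sqrt (m i + ε) * (‖v (u (x i))‖ / Real.sqrt (m i + ε)) := by
        intro i
        rw [mul_div_cancel₀]
        exact ne_of_gt (hsq i)
      rw [Finset.sum_congr rfl fun i _ => e i]
      have := Finset.sum_mul_sq_le_sq_mul_sq Finset.univ (fun i => Real.sqrt (m i + ε))
        (fun i => ‖v (u (x i))‖ / Real.sqrt (m i + ε))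
      calc (∑ i, Real.sqrt (m i + ε) * (‖v (u (x i))‖ / Real.sqrt (m i + ε))) ^ 2
          ≤ (∑ i, Real.sqrt (m i + ε) ^ 2) * ∑ i, (‖v (u (x i))‖ / Real.sqrt (m i + ε)) ^ 2 :=
            this
        _ = (∑ i, (m i + ε)) * (∑ i, ‖v (u (x i))‖ ^ 2 / (m i + ε)) := by
            congr 1
            · exact Finset.sum_congr rfl fun i _ => Real.sq_sqrt (le_of_lt (hme i))
            · refine Finset.sum_congr rfl fun i _ => ?_
              rw [div_pow, Real.sq_sqrt (le_of_lt (hme i))]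
    -- bound the second factor via 2-summingness of v and gram_riesz
    have hsum2 : ∑ i, ‖v (y i)‖ ^ 2 ≤ B ^ 2 * (S * A ^ 2) := by
      have h2 := hB n y
      set S2set : Set ℝ := {r : ℝ | ∃ g : Y →L[ℝ] ℝ, ‖g‖ ≤ 1 ∧
        r = (∑ i, |g (y i)| ^ (2:ℝ)) ^ (2:ℝ)⁻¹} with hS2set
      set S2 : ℝ := sSup S2set with hS2def
      have hS20 : 0 ≤ S2 := Real.sSup_nonneg (by
        rintro r ⟨g, hg, rfl⟩
        exact Real.rpow_nonneg
          (Finset.sum_nonneg fun i _ => Real.rpow_nonneg (abs_nonneg _) _) _)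
      -- every element of S2set is at most (S * A^2) ^ (2⁻¹)
      have hS2le : S2 ≤ (S * A ^ 2) ^ ((2:ℝ)⁻¹) := by
        apply Real.sSup_le _ (Real.rpow_nonneg (by positivity) _)
        rintro r ⟨g, hg, rfl⟩
        obtain ⟨w, hw1, hw2⟩ := gram_riesz u φ hpos hdom x g hg
        have hterm : ∀ i, |g (y i)| ^ (2:ℝ) ≤ φ (absC (evC (x i)) * (w * w)) := by
          intro i
          have hgyi : g (y i) = (Real.sqrt (m i + ε))⁻¹ * g (u (x i)) := by
            rw [hy]; simp [map_smul]
          have habs : |g (y i)| ^ (2:ℝ) = (g (u (x i))) ^ 2 / (m i + ε) := by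
            rw [show ((2:ℝ)) = ((2:ℕ):ℝ) by norm_num, Real.rpow_natCast, sq_abs, hgyi,
              mul_pow, inv_pow, Real.sq_sqrt (le_of_lt (hme i)), inv_mul_eq_div]
          rw [habs]
          -- (g (u xᵢ))² ≤ (m i) * φ (|evC xᵢ| * w²)
          have hphi0 : 0 ≤ φ (absC (evC (x i)) * (w * w)) := hpos _ (fun f => by
            simp only [ContinuousMap.mul_apply, absC_apply]
            exact mul_nonneg (abs_nonneg _) (mul_self_nonneg _))
          have hsq1 : (g (u (x i))) ^ 2 ≤ m i * φ (absC (evC (x i)) * (w * w)) := by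
            rw [hw1 i]
            -- |φ (evC xᵢ * w)| ≤ φ |evC xᵢ * w| and Cauchy-Schwarz
            have habs1 : (φ (evC (x i) * w)) ^ 2 ≤ (φ (absC (evC (x i) * w))) ^ 2 := by
              have h := phi_abs φ hpos (evC (x i) * w)
              have h0 : 0 ≤ φ (absC (evC (x i) * w)) := hpos _ (fun f => abs_nonneg _)
              nlinarith [abs_nonneg (φ (evC (x i) * w)), le_abs_self (φ (evC (x i) * w)),
                neg_abs_le (φ (evC (x i) * w))]
            have hcs2 : (φ (absC (evC (x i) * w))) ^ 2
                ≤ φ (absC (evC (x i))) * φ (absC (evC (x i)) * (w * w)) := by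
              have hab : absC (evC (x i) * w)
                  = sqrtC (absC (evC (x i))) * (sqrtC (absC (evC (x i))) * absC w) := by
                ext f
                simp only [ContinuousMap.mul_apply, absC_apply, sqrtC_apply]
                rw [← mul_assoc, Real.mul_self_sqrt (abs_nonneg _), abs_mul]
              have haa : sqrtC (absC (evC (x i))) * sqrtC (absC (evC (x i)))
                  = absC (evC (x i)) := by
                ext f
                simp only [ContinuousMap.mul_apply, sqrtC_apply, absC_apply]
                exact Real.mul_self_sqrt (abs_nonneg _)
              have hbb : (sqrtC (absC (evC (x i))) * absC w)
                  * (sqrtC (absC (evC (x i))) * absC w) = absC (evC (x i)) * (w * w) := by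
                ext f
                simp only [ContinuousMap.mul_apply, sqrtC_apply, absC_apply]
                rw [show Real.sqrt |evC (x i) f| * |w f| * (Real.sqrt |evC (x i) f| * |w f|)
                  = (Real.sqrt |evC (x i) f| * Real.sqrt |evC (x i) f|) * (|w f| * |w f|) by
                    ring, Real.mul_self_sqrt (abs_nonneg _), abs_mul_abs_self]
              calc (φ (absC (evC (x i) * w))) ^ 2
                  = (φ (sqrtC (absC (evC (x i))) * (sqrtC (absC (evC (x i))) * absC w))) ^ 2 := by
                    rw [hab]
                _ ≤ φ (sqrtC (absC (evC (x i))) * sqrtC (absC (evC (x i))))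
                    * φ ((sqrtC (absC (evC (x i))) * absC w)
                      * (sqrtC (absC (evC (x i))) * absC w)) :=
                    phi_cs φ hpos _ _
                _ = φ (absC (evC (x i))) * φ (absC (evC (x i)) * (w * w)) := by
                    rw [haa, hbb]
            calc (φ (evC (x i) * w)) ^ 2 ≤ (φ (absC (evC (x i) * w))) ^ 2 := habs1
              _ ≤ φ (absC (evC (x i))) * φ (absC (evC (x i)) * (w * w)) := hcs2
              _ = m i * φ (absC (evC (x i)) * (w * w)) := by rw [hm]
          rw [div_le_iff₀ (hme i)]
          calc (g (u (x i))) ^ 2 ≤ m i * φ (absC (evC (x i)) * (w * w)) := hsq1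
            _ ≤ (m i + ε) * φ (absC (evC (x i)) * (w * w)) := by nlinarith
            _ = φ (absC (evC (x i)) * (w * w)) * (m i + ε) := mul_comm _ _
        have hsumterm : ∑ i, |g (y i)| ^ (2:ℝ) ≤ S * A ^ 2 := by
          calc ∑ i, |g (y i)| ^ (2:ℝ) ≤ ∑ i, φ (absC (evC (x i)) * (w * w)) :=
              Finset.sum_le_sum fun i _ => hterm i
            _ = φ ((∑ i, absC (evC (x i))) * (w * w)) := by
                rw [← map_sum]
                congr 1
                ext f
                simp only [ContinuousMap.sum_apply, ContinuousMap.mul_apply, Finset.sum_mul]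
            _ ≤ φ (S • (w * w)) := by
                apply phi_mono φ hpos
                intro f
                simp only [ContinuousMap.mul_apply, ContinuousMap.sum_apply,
                  ContinuousMap.smul_apply, smul_eq_mul, absC_apply]
                have h1 : (∑ i, |evC (x i) f|) * (w f * w f) ≤ S * (w f * w f) :=
                  mul_le_mul_of_nonneg_right (hpointK f) (mul_self_nonneg _)
                exact h1
            _ = S * φ (w * w) := by rw [map_smul]; rfl
            _ ≤ S * A ^ 2 := mul_le_mul_of_nonneg_left hw2 hS0
        exact Real.rpow_le_rpow
          (Finset.sum_nonneg fun i _ => Real.rpow_nonneg (abs_nonneg _) _)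
          hsumterm (by norm_num)
      -- convert the rpow inequality from hB
      have hconv : (∑ i, ‖v (y i)‖ ^ (2:ℝ)) = ∑ i, ‖v (y i)‖ ^ 2 := by
        refine Finset.sum_congr rfl fun i _ => ?_
        rw [show ((2:ℝ)) = ((2:ℕ):ℝ) by norm_num, Real.rpow_natCast]
      rw [hconv] at h2
      have ht0 : 0 ≤ ∑ i, ‖v (y i)‖ ^ 2 := Finset.sum_nonneg fun i _ => sq_nonneg _
      have h3 : ((∑ i, ‖v (y i)‖ ^ 2) ^ ((2:ℝ)⁻¹)) ^ 2 ≤ (B * S2) ^ 2 := by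
        apply pow_le_pow_left₀ (Real.rpow_nonneg ht0 _) h2
      have h4 : ((∑ i, ‖v (y i)‖ ^ 2) ^ ((2:ℝ)⁻¹)) ^ 2 = ∑ i, ‖v (y i)‖ ^ 2 := by
        rw [← Real.rpow_natCast ((∑ i, ‖v (y i)‖ ^ 2) ^ ((2:ℝ)⁻¹)) 2,
          ← Real.rpow_mul ht0]
        norm_num
      have h5 : (B * S2) ^ 2 ≤ B ^ 2 * (S * A ^ 2) := by
        have hS2sq : S2 ^ 2 ≤ S * A ^ 2 := by
          have := pow_le_pow_left₀ hS20 hS2le 2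
          rwa [← Real.rpow_natCast ((S * A ^ 2) ^ ((2:ℝ)⁻¹)) 2,
            ← Real.rpow_mul (by positivity),
            (by norm_num : (2:ℝ)⁻¹ * ((2:ℕ):ℝ) = 1), Real.rpow_one] at this
        calc (B * S2) ^ 2 = B ^ 2 * S2 ^ 2 := by ring
          _ ≤ B ^ 2 * (S * A ^ 2) := by nlinarith [sq_nonneg B]
      linarith [h3, h4 ▸ h3]
    -- put the pieces together
    have hfinal : ∑ i, ‖v (u (x i))‖ ^ 2 / (m i + ε) ≤ B ^ 2 * (S * A ^ 2) := by
      have : ∀ i, ‖v (u (x i))‖ ^ 2 / (m i + ε) = ‖v (y i)‖ ^ 2 := fun i => (hvy i).symm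
      rw [Finset.sum_congr rfl fun i _ => this i]
      exact hsum2
    have hmesum : ∑ i, (m i + ε) ≤ S + n * ε := by
      rw [Finset.sum_add_distrib]
      simp only [Finset.sum_const, Finset.card_univ, Fintype.card_fin, nsmul_eq_mul]
      linarith [hmsum]
    calc (∑ i, ‖v (u (x i))‖) ^ 2
        ≤ (∑ i, (m i + ε)) * (∑ i, ‖v (u (x i))‖ ^ 2 / (m i + ε)) := hcs
      _ ≤ (S + n * ε) * (B ^ 2 * (S * A ^ 2)) := by
          apply mul_le_mul hmesum hfinal (Finset.sum_nonneg fun i _ =>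
            div_nonneg (sq_nonneg _) (le_of_lt (hme i)))
          nlinarith [hS0, Nat.cast_nonneg (α := ℝ) n, hε]
  -- let ε → 0
  set D : ℝ := ∑ i, ‖v (u (x i))‖ with hD
  have hD0 : 0 ≤ D := Finset.sum_nonneg fun i _ => norm_nonneg _
  set C : ℝ := B ^ 2 * (S * A ^ 2) with hC
  have hC0 : 0 ≤ C := by positivity
  have hDC : D ^ 2 ≤ S * C := by
    apply le_of_forall_pos_le_add
    intro δ hδ
    have hε : (0:ℝ) < δ / (n * C + 1) := div_pos hδ (by positivity)
    have h1 := key (δ / (n * C + 1)) hε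
    have h2 : (S + n * (δ / (n * C + 1))) * C ≤ S * C + δ := by
      have hnC : (0:ℝ) ≤ n * C := by positivity
      have h3 : n * (δ / (n * C + 1)) * C = (n * C) * (δ / (n * C + 1)) := by ring
      have h4 : (n * C) * (δ / (n * C + 1)) ≤ (n * C + 1) * (δ / (n * C + 1)) := by
        apply mul_le_mul_of_nonneg_right (by linarith) (le_of_lt hε)
      have h5 : (n * C + 1) * (δ / (n * C + 1)) = δ := by
        field_simp
      nlinarith
    calc D ^ 2 ≤ (S + n * (δ / (n * C + 1))) * C := h1
      _ ≤ S * C + δ := h2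
  have hgoal : D ≤ B * A * S := by
    have hSC : S * C = (B * A * S) ^ 2 := by rw [hC]; ring
    rw [hSC] at hDC
    have := Real.sqrt_le_sqrt hDC
    rwa [Real.sqrt_sq hD0, Real.sqrt_sq (by positivity)] at this
  exact hgoal

end KeyLemma

section PiNormFacts

variable {X Y : Type} [NormedAddCommGroup X] [NormedSpace ℝ X]
  [NormedAddCommGroup Y] [NormedSpace ℝ Y]

theorem piNorm_spec (p : ℝ) (u : X →L[ℝ] Y)
    (h : ∃ a : ℝ, 0 ≤ a ∧ IsPSummingWith p u a) :
    0 ≤ piNorm p u ∧ IsPSummingWith p u (piNorm p u) := by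
  classical
  set L : Set ℝ := {lam : ℝ | 0 ≤ lam ∧ IsPSummingWith p u lam} with hL
  have hne : L.Nonempty := h
  have hbdd : BddBelow L := ⟨0, fun l hl => hl.1⟩
  have h0 : 0 ≤ piNorm p u := le_csInf hne (fun l hl => hl.1)
  refine ⟨h0, ?_⟩
  intro n x
  set c : ℝ := sSup {r : ℝ | ∃ f : X →L[ℝ] ℝ, ‖f‖ ≤ 1 ∧
    r = (∑ i, |f (x i)| ^ p) ^ p⁻¹} with hc
  have hc0 : 0 ≤ c := Real.sSup_nonneg (by
    rintro r ⟨f, hf, rfl⟩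
    exact Real.rpow_nonneg
      (Finset.sum_nonneg fun i _ => Real.rpow_nonneg (abs_nonneg _) _) _)
  have h1 : ∀ lam ∈ L, (∑ i, ‖u (x i)‖ ^ p) ^ p⁻¹ ≤ lam * c := fun lam hl => hl.2 n x
  rcases eq_or_lt_of_le hc0 with hczero | hcpos
  · obtain ⟨a, ha⟩ := hne
    have := h1 a ha
    rw [← hczero, mul_zero] at this ⊢
    exact this
  · have h2 : (∑ i, ‖u (x i)‖ ^ p) ^ p⁻¹ / c ≤ piNorm p u := by
      apply le_csInf hne
      intro lam hl
      rw [div_le_iff₀ hcpos]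
      exact h1 lam hl
    rw [div_le_iff₀ hcpos] at h2
    exact h2

end PiNormFacts


/-- **Composition of two 2-absolutely summing operators is 1-absolutely summing**,
with `π₁(v ∘ u) ≤ π₂(v) π₂(u)`. -/
theorem comp_two_summing_is_one_summing
    {X Y Z : Type}
    [NormedAddCommGroup X] [NormedSpace ℝ X] [CompleteSpace X]
    [NormedAddCommGroup Y] [NormedSpace ℝ Y] [CompleteSpace Y]
    [NormedAddCommGroup Z] [NormedSpace ℝ Z] [CompleteSpace Z]
    (u : X →L[ℝ] Y) (v : Y →L[ℝ] Z)
    (hu : ∃ a : ℝ, 0 ≤ a ∧ IsPSummingWith 2 u a)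
    (hv : ∃ b : ℝ, 0 ≤ b ∧ IsPSummingWith 2 v b) :
    IsPSummingWith 1 (v.comp u) (piNorm 2 v * piNorm 2 u) ∧
    piNorm 1 (v.comp u) ≤ piNorm 2 v * piNorm 2 u := by
  obtain ⟨hA0, hAsum⟩ := piNorm_spec 2 u hu
  obtain ⟨hB0, hBsum⟩ := piNorm_spec 2 v hv
  have hkey : IsPSummingWith 1 (v.comp u) (piNorm 2 v * piNorm 2 u) :=
    comp_summing_key u v hA0 hB0 hAsum hBsum
  refine ⟨hkey, ?_⟩
  apply csInf_le ⟨0, fun l hl => hl.1⟩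
  exact ⟨mul_nonneg hB0 hA0, hkey⟩
end

section
/- Let G be a separable almost ω-homogeneous Banach space. Then for any finite-dimensional subspace A ⊆ G and any isometric embedding i : A → G, the relative projection constants agree: λ(A ↪ G) = λ(iA ↪ G), where λ(B ↪ G) = inf{‖P‖ : P : G → B a bounded projection onto B}. -/
/-- `G` is almost `ω`-homogeneous (with respect to its own finite-dimensional subspaces):
for every finite-dimensional subspace `B` of `G`, every subspace `A` of `B`, every
isometric embedding `i : A → G` and every `ε > 0`, there is an injective linear
`j : B → G` extending `i` with `‖j‖‖j⁻¹‖ ≤ 1 + ε`. -/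
def AlmostOmegaHomogeneous (G : Type) [NormedAddCommGroup G] [NormedSpace ℝ G] : Prop :=
  ∀ (B : Submodule ℝ G), FiniteDimensional ℝ B →
    ∀ (A : Submodule ℝ B) (i : A →ₗᵢ[ℝ] G) (ε : ℝ), 0 < ε →
      ∃ j : B →ₗ[ℝ] G, Function.Injective j ∧ (∀ a : A, j (a : B) = i a) ∧
        ∃ c d : ℝ, (∀ b : B, ‖j b‖ ≤ c * ‖b‖) ∧ (∀ b : B, ‖b‖ ≤ d * ‖j b‖) ∧
          c * d ≤ 1 + ε

/-- The relative projection constant `λ(A ↪ G)`: the infimum of the norms of bounded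
linear projections of `G` onto `A`. -/
noncomputable def projConst (G : Type) [NormedAddCommGroup G] [NormedSpace ℝ G]
    (A : Submodule ℝ G) : ℝ :=
  sInf {r : ℝ | ∃ P : G →L[ℝ] G, (∀ x, P x ∈ A) ∧ (∀ a ∈ A, P a = a) ∧ r = ‖P‖}

section Aux

variable (G : Type) [NormedAddCommGroup G] [NormedSpace ℝ G]

/-- The set whose infimum is `projConst`. -/
def projSet (A : Submodule ℝ G) : Set ℝ :=
  {r : ℝ | ∃ P : G →L[ℝ] G, (∀ x, P x ∈ A) ∧ (∀ a ∈ A, P a = a) ∧ r = ‖P‖}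

lemma projSet_bddBelow (A : Submodule ℝ G) : BddBelow (projSet G A) := by
  refine ⟨0, fun r hr => ?_⟩
  obtain ⟨P, -, -, rfl⟩ := hr
  exact norm_nonneg P

lemma projSet_nonempty (A : Submodule ℝ G) [FiniteDimensional ℝ A] :
    (projSet G A).Nonempty := by
  obtain ⟨f, hf⟩ := Submodule.ClosedComplemented.of_finiteDimensional A
  refine ⟨‖A.subtypeL.comp f‖, A.subtypeL.comp f, fun x => (f x).2, fun a ha => ?_, rfl⟩
  have := hf ⟨a, ha⟩
  simp only [ContinuousLinearMap.comp_apply, Submodule.subtypeL_apply]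
  rw [this]

lemma projConst_nonneg (A : Submodule ℝ G) : 0 ≤ projConst G A := by
  apply Real.sInf_nonneg
  rintro r ⟨P, -, -, rfl⟩
  exact norm_nonneg P

/-- Key one-sided estimate: for an isometric embedding `i : A → G`, the projection
constant of the range of `i` is at most that of `A`. -/
lemma projConst_range_le [CompleteSpace G]
    (hG : AlmostOmegaHomogeneous G)
    (A : Submodule ℝ G) [FiniteDimensional ℝ A] (i : A →ₗᵢ[ℝ] G) :
    projConst G (LinearMap.range i.toLinearMap) ≤ projConst G A := by
  set R : Submodule ℝ G := LinearMap.range i.toLinearMap with hR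
  by_cases hbot : A = ⊥
  · have hRbot : R = ⊥ := by
      rw [hR, LinearMap.range_eq_bot]
      ext a
      have : a = 0 := Subtype.ext ((Submodule.eq_bot_iff A).mp hbot _ a.2)
      simp [this]
    rw [hRbot, hbot]
  -- A ≠ ⊥ : fix a nonzero element of A
  obtain ⟨a₀g, ha₀A, ha₀ne⟩ := Submodule.exists_mem_ne_zero_of_ne_bot hbot
  set a₀ : A := ⟨a₀g, ha₀A⟩ with ha₀
  have ha₀ne' : a₀ ≠ 0 := fun h => ha₀ne (congrArg Subtype.val h)
  have hy₀R : (i a₀ : G) ∈ R := ⟨a₀, rfl⟩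
  have hy₀ne : (i a₀ : G) ≠ 0 := by
    intro h
    exact ha₀ne' (i.injective (by simpa using h))
  -- main step: for every ε > 0, projConst G R ≤ (1+ε) * projConst G A
  have hstep : ∀ ε : ℝ, 0 < ε → projConst G R ≤ (1 + ε) * projConst G A := by
    intro ε hε
    have h1ε : (0:ℝ) < 1 + ε := by linarith
    -- it suffices to bound against each element of projSet G A
    have key : ∀ r ∈ projSet G A, projConst G R ≤ (1 + ε) * r := by
      rintro r ⟨P, hPmem, hPfix, rfl⟩
      classical
      -- the directed index type of finite-dimensional subspaces containing R
      let ι := {F : Submodule ℝ G // FiniteDimensional ℝ F ∧ R ≤ F}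
      haveI : Nonempty ι := ⟨⟨R, inferInstance, le_rfl⟩⟩
      -- the "eventually contains" filter
      let l : Filter ι := ⨅ F₀ : ι, Filter.principal {F : ι | F₀.1 ≤ F.1}
      have hl_mem : ∀ F₀ : ι, {F : ι | F₀.1 ≤ F.1} ∈ l := fun F₀ =>
        Filter.mem_iInf_of_mem F₀ (Filter.mem_principal_self _)
      haveI hlne : l.NeBot := by
        apply Filter.iInf_neBot_of_directed'
        · intro F₁ F₂
          haveI := F₁.2.1
          haveI := F₂.2.1
          refine ⟨⟨F₁.1 ⊔ F₂.1, ⟨inferInstance, le_trans F₁.2.2 le_sup_left⟩⟩, ?_, ?_⟩ <;>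
            simp only [ge_iff_le, Filter.le_principal_iff, Filter.mem_principal]
          · intro F hF
            have h' : F₁.1 ⊔ F₂.1 ≤ F.1 := hF
            show F₁.1 ≤ F.1
            exact le_trans le_sup_left h'
          · intro F hF
            have h' : F₁.1 ⊔ F₂.1 ≤ F.1 := hF
            show F₂.1 ≤ F.1
            exact le_trans le_sup_right h'
        · intro F₀
          rw [Filter.principal_neBot_iff]
          exact ⟨F₀, le_refl F₀.1⟩
      let u : Ultrafilter ι := Ultrafilter.of l
      have hul : (u : Filter ι) ≤ l := Ultrafilter.of_le l
      have hu_mem : ∀ F₀ : ι, {F : ι | F₀.1 ≤ F.1} ∈ u := fun F₀ => hul (hl_mem F₀)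
      -- eventually any given point lies in F
      have hmemF : ∀ x : G, ∀ᶠ F in (u : Filter ι), x ∈ F.1 := by
        intro x
        have hx : x ∈ R ⊔ Submodule.span ℝ {x} :=
          Submodule.mem_sup_right (Submodule.mem_span_singleton_self x)
        haveI : FiniteDimensional ℝ ↥(Submodule.span ℝ ({x} : Set G)) := by
          infer_instance
        refine Filter.mem_of_superset
          (hu_mem ⟨R ⊔ Submodule.span ℝ {x}, inferInstance, le_sup_left⟩) ?_
        intro F hF
        exact hF hx
      -- the copy of R inside F
      let A' : ∀ F : ι, Submodule ℝ F.1 := fun F => R.comap F.1.subtype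
      let e : A ≃ₗᵢ[ℝ] R := i.equivRange
      have he : ∀ z : R, (i (e.symm z) : G) = (z : G) := by
        intro z
        have : e (e.symm z) = z := e.apply_symm_apply z
        have h2 : ((e (e.symm z) : R) : G) = (z : G) := congrArg _ this
        rwa [LinearIsometry.equivRange_apply_coe] at h2
      -- the inverse isometry, defined on A' F
      let i' : ∀ F : ι, (A' F) →ₗᵢ[ℝ] G := fun F =>
        { toLinearMap :=
          { toFun := fun a => ((e.symm ⟨(a : F.1), a.2⟩ : A) : G)
            map_add' := by
              intro a b
              rw [← Submodule.coe_add, ← LinearIsometryEquiv.map_add]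
              congr 1
            map_smul' := by
              intro c a
              rw [RingHom.id_apply, ← Submodule.coe_smul, ← LinearIsometryEquiv.map_smul]
              congr 1 }
          norm_map' := by
            intro a
            simp only [LinearMap.coe_mk, AddHom.coe_mk]
            rw [show ‖((e.symm ⟨(a : F.1), a.2⟩ : A) : G)‖ = ‖(e.symm ⟨(a : F.1), a.2⟩ : A)‖
              from rfl]
            rw [e.symm.norm_map]
            rfl }
      -- apply almost ω-homogeneity
      choose j hjinj hjext c d hc hd hcd using fun F : ι => hG F.1 F.2.1 (A' F) (i' F) ε hε
      -- the extension maps fix the copy of R pointwise into A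
      have hjR : ∀ (F : ι) (y : G) (hy : y ∈ R),
          j F ⟨y, F.2.2 hy⟩ = ((e.symm ⟨y, hy⟩ : A) : G) := by
        intro F y hy
        have ha' : (⟨y, F.2.2 hy⟩ : F.1) ∈ A' F := hy
        have := hjext F ⟨⟨y, F.2.2 hy⟩, ha'⟩
        exact this
      -- c F ≤ 1 + ε
      have hc1 : ∀ F : ι, 1 ≤ c F ∧ c F ≤ 1 + ε := by
        intro F
        set y₀ : G := (i a₀ : G)
        have hy₀F : y₀ ∈ F.1 := F.2.2 hy₀R
        have hjy₀ : j F ⟨y₀, hy₀F⟩ = ((e.symm ⟨y₀, hy₀R⟩ : A) : G) := hjR F y₀ hy₀R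
        have hnorm_e : ‖((e.symm ⟨y₀, hy₀R⟩ : A) : G)‖ = ‖y₀‖ := by
          rw [show ‖((e.symm ⟨y₀, hy₀R⟩ : A) : G)‖ = ‖(e.symm ⟨y₀, hy₀R⟩ : A)‖ from rfl,
            e.symm.norm_map]
          rfl
        have hny₀ : (0:ℝ) < ‖y₀‖ := norm_pos_iff.mpr hy₀ne
        have hb : ‖(⟨y₀, hy₀F⟩ : F.1)‖ = ‖y₀‖ := rfl
        have h1 : ‖y₀‖ ≤ c F * ‖y₀‖ := by
          have := hc F ⟨y₀, hy₀F⟩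
          rwa [hjy₀, hnorm_e, hb] at this
        have h2 : ‖y₀‖ ≤ d F * ‖y₀‖ := by
          have := hd F ⟨y₀, hy₀F⟩
          rwa [hjy₀, hnorm_e, hb] at this
        have hcF : 1 ≤ c F := le_of_mul_le_mul_right (by linarith) hny₀
        have hdF : 1 ≤ d F := le_of_mul_le_mul_right (by linarith) hny₀
        refine ⟨hcF, ?_⟩
        calc c F = c F * 1 := (mul_one _).symm
        _ ≤ c F * d F := by
            apply mul_le_mul_of_nonneg_left hdF (by linarith)
        _ ≤ 1 + ε := hcd F
      -- the approximating maps
      let f : ι → G → G := fun F x =>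
        if hx : x ∈ F.1 then (i ⟨P (j F ⟨x, hx⟩), hPmem _⟩ : G) else 0
      set M : ℝ := (1 + ε) * ‖P‖ with hM
      have hM0 : 0 ≤ M := mul_nonneg (by linarith) (norm_nonneg _)
      have hfmem : ∀ (F : ι) (x : G), f F x ∈ R := by
        intro F x
        by_cases hx : x ∈ F.1
        · simp only [f, dif_pos hx]
          exact ⟨_, rfl⟩
        · simp only [f, dif_neg hx]
          exact R.zero_mem
      have hfnorm : ∀ (F : ι) (x : G), x ∈ F.1 → ‖f F x‖ ≤ M * ‖x‖ := by
        intro F x hx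
        simp only [f, dif_pos hx]
        have h1 : ‖(i ⟨P (j F ⟨x, hx⟩), hPmem _⟩ : G)‖ = ‖P (j F ⟨x, hx⟩)‖ := by
          rw [show ‖(i ⟨P (j F ⟨x, hx⟩), hPmem _⟩ : G)‖
              = ‖(i (⟨P (j F ⟨x, hx⟩), hPmem _⟩ : A))‖ from rfl, i.norm_map]
          rfl
        rw [h1]
        have h2 : ‖P (j F ⟨x, hx⟩)‖ ≤ ‖P‖ * ‖j F ⟨x, hx⟩‖ := P.le_opNorm _
        have h3 : ‖j F ⟨x, hx⟩‖ ≤ c F * ‖(⟨x, hx⟩ : F.1)‖ := hc F _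
        have h4 : ‖(⟨x, hx⟩ : F.1)‖ = ‖x‖ := rfl
        have h5 := (hc1 F).2
        have h6 := (hc1 F).1
        have hP0 : (0:ℝ) ≤ ‖P‖ := norm_nonneg _
        have hx0 : (0:ℝ) ≤ ‖x‖ := norm_nonneg _
        rw [h4] at h3
        calc ‖P (j F ⟨x, hx⟩)‖ ≤ ‖P‖ * ‖j F ⟨x, hx⟩‖ := h2
        _ ≤ ‖P‖ * (c F * ‖x‖) := by
            apply mul_le_mul_of_nonneg_left h3 hP0
        _ ≤ ‖P‖ * ((1 + ε) * ‖x‖) := by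
            apply mul_le_mul_of_nonneg_left (mul_le_mul_of_nonneg_right h5 hx0) hP0
        _ = M * ‖x‖ := by ring
      have hffix : ∀ (F : ι) (y : G), y ∈ R → f F y = y := by
        intro F y hy
        have hyF : y ∈ F.1 := F.2.2 hy
        simp only [f, dif_pos hyF]
        rw [hjR F y hy]
        have hPy : P ((e.symm ⟨y, hy⟩ : A) : G) = ((e.symm ⟨y, hy⟩ : A) : G) :=
          hPfix _ (e.symm ⟨y, hy⟩).2
        have : (⟨P ((e.symm ⟨y, hy⟩ : A) : G), hPmem _⟩ : A) = e.symm ⟨y, hy⟩ :=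
          Subtype.ext hPy
        rw [this, he]
      have hfadd : ∀ (F : ι) (x y : G), x ∈ F.1 → y ∈ F.1 →
          f F (x + y) = f F x + f F y := by
        intro F x y hx hy
        have hxy : x + y ∈ F.1 := F.1.add_mem hx hy
        simp only [f, dif_pos hx, dif_pos hy, dif_pos hxy]
        have h1 : (⟨x + y, hxy⟩ : F.1) = ⟨x, hx⟩ + ⟨y, hy⟩ := rfl
        have hj : j F ⟨x + y, hxy⟩ = j F ⟨x, hx⟩ + j F ⟨y, hy⟩ := by
          rw [h1, map_add]
        have hP : P (j F ⟨x + y, hxy⟩) = P (j F ⟨x, hx⟩) + P (j F ⟨y, hy⟩) := by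
          rw [hj, map_add]
        have hA : (⟨P (j F ⟨x + y, hxy⟩), hPmem _⟩ : A)
            = ⟨P (j F ⟨x, hx⟩), hPmem _⟩ + ⟨P (j F ⟨y, hy⟩), hPmem _⟩ := Subtype.ext hP
        rw [hA, map_add]
      have hfsmul : ∀ (F : ι) (s : ℝ) (x : G), x ∈ F.1 →
          f F (s • x) = s • f F x := by
        intro F s x hx
        have hsx : s • x ∈ F.1 := F.1.smul_mem s hx
        simp only [f, dif_pos hx, dif_pos hsx]
        have h1 : (⟨s • x, hsx⟩ : F.1) = s • ⟨x, hx⟩ := rfl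
        have hj : j F ⟨s • x, hsx⟩ = s • j F ⟨x, hx⟩ := by
          rw [h1, map_smul]
        have hP : P (j F ⟨s • x, hsx⟩) = s • P (j F ⟨x, hx⟩) := by
          rw [hj, map_smul]
        have hA : (⟨P (j F ⟨s • x, hsx⟩), hPmem _⟩ : A)
            = s • ⟨P (j F ⟨x, hx⟩), hPmem _⟩ := Subtype.ext hP
        rw [hA, map_smul]
      -- ultrafilter limits
      have hlim : ∀ x : G, ∃ t : G, t ∈ R ∧ ‖t‖ ≤ M * ‖x‖ ∧
          Filter.Tendsto (fun F => f F x) (u : Filter ι) (nhds t) := by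
        intro x
        set K : Set G := (fun z : R => (z : G)) '' (Metric.closedBall (0 : R) (M * ‖x‖))
          with hK
        have hKc : IsCompact K :=
          (isCompact_closedBall (0 : R) (M * ‖x‖)).image continuous_subtype_val
        have hev : ∀ᶠ F in (u : Filter ι), f F x ∈ K := by
          filter_upwards [hmemF x] with F hF
          refine ⟨⟨f F x, hfmem F x⟩, ?_, rfl⟩
          rw [Metric.mem_closedBall, dist_zero_right]
          exact hfnorm F x hF
        have hmap : (Ultrafilter.map (fun F => f F x) u : Filter G) ≤
            Filter.principal K := by
          rw [Filter.le_principal_iff]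
          exact hev
        obtain ⟨t, htK, htle⟩ := hKc.ultrafilter_le_nhds _ hmap
        obtain ⟨z, hz, hzt⟩ := htK
        refine ⟨t, ?_, ?_, htle⟩
        · rw [← hzt]; exact z.2
        · rw [← hzt]
          rw [Metric.mem_closedBall, dist_zero_right] at hz
          exact hz
      choose T hTmem hTnorm hTtend using hlim
      -- T is additive
      have hTadd : ∀ x y : G, T (x + y) = T x + T y := by
        intro x y
        have h1 : Filter.Tendsto (fun F => f F x + f F y) (u : Filter ι)
            (nhds (T x + T y)) := (hTtend x).add (hTtend y)
        have h2 : (fun F => f F (x + y)) =ᶠ[(u : Filter ι)]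
            (fun F => f F x + f F y) := by
          filter_upwards [hmemF x, hmemF y] with F hx hy
          exact hfadd F x y hx hy
        exact tendsto_nhds_unique (hTtend (x + y)) (h1.congr' h2.symm)
      have hTsmul : ∀ (s : ℝ) (x : G), T (s • x) = s • T x := by
        intro s x
        have h1 : Filter.Tendsto (fun F => s • f F x) (u : Filter ι)
            (nhds (s • T x)) := (hTtend x).const_smul s
        have h2 : (fun F => f F (s • x)) =ᶠ[(u : Filter ι)]
            (fun F => s • f F x) := by
          filter_upwards [hmemF x] with F hx
          exact hfsmul F s x hx
        exact tendsto_nhds_unique (hTtend (s • x)) (h1.congr' h2.symm)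
      have hTfix : ∀ y ∈ R, T y = y := by
        intro y hy
        have h1 : Filter.Tendsto (fun _ : ι => y) (u : Filter ι) (nhds y) :=
          tendsto_const_nhds
        have h2 : (fun F => f F y) =ᶠ[(u : Filter ι)] (fun _ => y) :=
          Filter.Eventually.of_forall (fun F => hffix F y hy)
        exact tendsto_nhds_unique (hTtend y) (h1.congr' h2.symm)
      -- package into a continuous linear map
      let Tlin : G →ₗ[ℝ] G :=
        { toFun := T
          map_add' := hTadd
          map_smul' := fun s x => by rw [RingHom.id_apply]; exact hTsmul s x }
      have hTb : ∀ x : G, ‖Tlin x‖ ≤ M * ‖x‖ := hTnorm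
      let Q : G →L[ℝ] G := Tlin.mkContinuous M hTb
      have hQnorm : ‖Q‖ ≤ M := Tlin.mkContinuous_norm_le hM0 hTb
      have hQmem : ‖Q‖ ∈ projSet G R := by
        refine ⟨Q, fun x => hTmem x, fun a ha => hTfix a ha, rfl⟩
      calc projConst G R ≤ ‖Q‖ := csInf_le (projSet_bddBelow G R) hQmem
      _ ≤ M := hQnorm
      _ = (1 + ε) * ‖P‖ := hM
    -- conclude via csInf
    have h2 : projConst G R / (1 + ε) ≤ projConst G A := by
      apply le_csInf (projSet_nonempty G A)
      intro r hr
      rw [div_le_iff₀ h1ε]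
      calc projConst G R ≤ (1 + ε) * r := key r hr
      _ = r * (1 + ε) := by ring
    calc projConst G R = (projConst G R / (1 + ε)) * (1 + ε) := by
          field_simp
    _ ≤ projConst G A * (1 + ε) := by
          apply mul_le_mul_of_nonneg_right h2 (le_of_lt h1ε)
    _ = (1 + ε) * projConst G A := by ring
  -- let ε → 0
  have hA0 : 0 ≤ projConst G A := projConst_nonneg G A
  apply le_of_forall_pos_le_add
  intro δ hδ
  have hp1 : (0:ℝ) < projConst G A + 1 := by linarith
  have hε : (0:ℝ) < δ / (projConst G A + 1) := div_pos hδ hp1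
  have := hstep _ hε
  have h3 : δ / (projConst G A + 1) * projConst G A ≤ δ := by
    rw [div_mul_eq_mul_div, div_le_iff₀ hp1]
    nlinarith
  nlinarith

end Aux

/-- **Projection constants in almost `ω`-homogeneous spaces.**
If `G` is a separable almost `ω`-homogeneous Banach space, then for any finite-dimensional
subspace `A ⊆ G` and any isometric embedding `i : A → G`,
`λ(A ↪ G) = λ(iA ↪ G)`. -/
theorem projConst_invariant_of_almost_omega_homogeneous
    (G : Type) [NormedAddCommGroup G] [NormedSpace ℝ G] [CompleteSpace G]
    [TopologicalSpace.SeparableSpace G]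
    (hG : AlmostOmegaHomogeneous G)
    (A : Submodule ℝ G) [FiniteDimensional ℝ A] (i : A →ₗᵢ[ℝ] G) :
    projConst G A = projConst G (LinearMap.range i.toLinearMap) := by
  have h1 : projConst G (LinearMap.range i.toLinearMap) ≤ projConst G A :=
    projConst_range_le G hG A i
  -- the inverse isometry
  set R : Submodule ℝ G := LinearMap.range i.toLinearMap with hR
  let e : A ≃ₗᵢ[ℝ] R := i.equivRange
  let i' : R →ₗᵢ[ℝ] G := A.subtypeₗᵢ.comp e.symm.toLinearIsometry
  have hrange : LinearMap.range i'.toLinearMap = A := by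
    have heq : i'.toLinearMap = A.subtype.comp (e.symm.toLinearEquiv : R →ₗ[ℝ] A) := rfl
    rw [heq, LinearMap.range_comp, LinearEquiv.range, Submodule.map_top,
      Submodule.range_subtype]
  have h2 : projConst G (LinearMap.range i'.toLinearMap) ≤ projConst G R :=
    projConst_range_le G hG R i'
  rw [hrange] at h2
  exact le_antisymm h2 h1
end

section
/- Let X^f be a class of finite equivalence of Banach spaces whose Minkowski base 𝔐(X^f) has the amalgamation property. Then a space E ∈ X^f is existentially closed in X^f if and only if E is almost ω-homogeneous. -/
/-- A finite-dimensional real Banach space (bundled). -/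
structure FDBanach : Type 1 where
  carrier : Type
  [grp : NormedAddCommGroup carrier]
  [mod : NormedSpace ℝ carrier]
  [fd : FiniteDimensional ℝ carrier]

attribute [instance] FDBanach.grp FDBanach.mod FDBanach.fd

/-- `X` is finitely representable in `Y`: every finite-dimensional subspace of `X`
embeds into `Y` with distortion at most `1 + ε`, for every `ε > 0`. -/
def FinRep (X : Type) [NormedAddCommGroup X] [NormedSpace ℝ X]
    (Y : Type) [NormedAddCommGroup Y] [NormedSpace ℝ Y] : Prop :=
  ∀ (A : Submodule ℝ X), FiniteDimensional ℝ A → ∀ ε : ℝ, 0 < ε →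
    ∃ j : A →ₗ[ℝ] Y, Function.Injective j ∧
      ∃ c d : ℝ, (∀ a : A, ‖j a‖ ≤ c * ‖a‖) ∧ (∀ a : A, ‖a‖ ≤ d * ‖j a‖) ∧ c * d ≤ 1 + ε

/-- The Minkowski base `𝔐(X^f)` of the class generated by `X` has the amalgamation
property: every V-formation of finite-dimensional spaces finitely representable in `X`,
with isometric embeddings, admits an amalgam in `𝔐(X^f)`. -/
def AmalgamationProperty (X : Type) [NormedAddCommGroup X] [NormedSpace ℝ X] : Prop :=
  ∀ (A B₁ B₂ : FDBanach),
    FinRep A.carrier X → FinRep B₁.carrier X → FinRep B₂.carrier X →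
    ∀ (i₁ : A.carrier →ₗᵢ[ℝ] B₁.carrier) (i₂ : A.carrier →ₗᵢ[ℝ] B₂.carrier),
      ∃ F : FDBanach, FinRep F.carrier X ∧
        ∃ (j₁ : B₁.carrier →ₗᵢ[ℝ] F.carrier) (j₂ : B₂.carrier →ₗᵢ[ℝ] F.carrier),
          ∀ a : A.carrier, j₁ (i₁ a) = j₂ (i₂ a)

/-- `E` is existentially closed in the class `X^f`: for every isometric embedding
`i : E → Z` into a space `Z` of the class `X^f`, the image `iE` is a reflecting
subspace of `Z`. -/
def ExistentiallyClosedIn (E : Type) [NormedAddCommGroup E] [NormedSpace ℝ E]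
    (X : Type) [NormedAddCommGroup X] [NormedSpace ℝ X] : Prop :=
  ∀ (Z : Type) [NormedAddCommGroup Z] [NormedSpace ℝ Z] [CompleteSpace Z],
    FinRep Z X → FinRep X Z → ∀ i : E →ₗᵢ[ℝ] Z,
      ∀ (A : Submodule ℝ Z), FiniteDimensional ℝ A → ∀ ε : ℝ, 0 < ε →
        ∃ u : A →ₗ[ℝ] Z, Function.Injective u ∧
          LinearMap.range u ≤ LinearMap.range i.toLinearMap ∧
          (∀ a : A, (a : Z) ∈ LinearMap.range i.toLinearMap → u a = (a : Z)) ∧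
          ∃ c d : ℝ, (∀ a : A, ‖u a‖ ≤ c * ‖a‖) ∧ (∀ a : A, ‖a‖ ≤ d * ‖u a‖) ∧
            c * d ≤ 1 + ε

/-- `E` is almost `ω`-homogeneous (with respect to `𝔐(X^f)`): every isometric embedding
into `E` of a subspace `A` of a finite-dimensional space `B ∈ 𝔐(X^f)` extends, for every
`ε > 0`, to a `(1+ε)`-embedding of `B` into `E`. -/
def AlmostOmegaHomogeneousIn (E : Type) [NormedAddCommGroup E] [NormedSpace ℝ E]
    (X : Type) [NormedAddCommGroup X] [NormedSpace ℝ X] : Prop :=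
  ∀ (B : FDBanach), FinRep B.carrier X →
    ∀ (A : Submodule ℝ B.carrier) (i : A →ₗᵢ[ℝ] E) (ε : ℝ), 0 < ε →
      ∃ j : B.carrier →ₗ[ℝ] E, Function.Injective j ∧ (∀ a : A, j (a : B.carrier) = i a) ∧
        ∃ c d : ℝ, (∀ b : B.carrier, ‖j b‖ ≤ c * ‖b‖) ∧
          (∀ b : B.carrier, ‖b‖ ≤ d * ‖j b‖) ∧ c * d ≤ 1 + ε

noncomputable section EcAux

open Function Filter UniformSpace Metric Set

/-- Composition of an embedding with finite representability. -/
lemma EcAux.emb_trans {X W Y : Type} [NormedAddCommGroup X] [NormedSpace ℝ X]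
    [NormedAddCommGroup W] [NormedSpace ℝ W]
    [NormedAddCommGroup Y] [NormedSpace ℝ Y] [FiniteDimensional ℝ W]
    (hY : FinRep Y X) (f : W →ₗ[ℝ] Y) (hf : Injective f)
    {c₁ d₁ : ℝ} (hc₁ : ∀ w, ‖f w‖ ≤ c₁ * ‖w‖) (hd₁ : ∀ w, ‖w‖ ≤ d₁ * ‖f w‖)
    {δ : ℝ} (hδ : 0 < δ) :
    ∃ g : W →ₗ[ℝ] X, Injective g ∧ ∃ c d : ℝ,
      (∀ w, ‖g w‖ ≤ c * ‖w‖) ∧ (∀ w, ‖w‖ ≤ d * ‖g w‖) ∧ c * d ≤ c₁ * d₁ * (1 + δ) := by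
  rcases subsingleton_or_nontrivial W with hW | hW
  · refine ⟨0, fun a b _ => Subsingleton.elim a b, c₁ * d₁ * (1 + δ), 1, ?_, ?_, ?_⟩
    · intro w
      have : w = 0 := Subsingleton.elim w 0
      simp [this]
    · intro w
      have : w = 0 := Subsingleton.elim w 0
      simp [this]
    · rw [mul_one]
  · obtain ⟨j, hj, c₂, d₂, hc₂, hd₂, hcd₂⟩ :=
      hY (LinearMap.range f) inferInstance δ hδ
    -- positivity facts
    obtain ⟨w₀, hw₀⟩ := exists_ne (0 : W)
    have hnw₀ : 0 < ‖w₀‖ := norm_pos_iff.2 hw₀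
    have hfw₀ : 0 < ‖f w₀‖ := by
      rcases lt_or_ge 0 ‖f w₀‖ with h | h
      · exact h
      · exfalso
        have h0 : ‖f w₀‖ = 0 := le_antisymm h (norm_nonneg _)
        have := hd₁ w₀
        rw [h0, mul_zero] at this
        exact absurd (le_antisymm this (norm_nonneg _)) (ne_of_gt hnw₀)
    have hc₁pos : 0 < c₁ := by
      have := hc₁ w₀
      nlinarith
    have hd₁pos : 0 < d₁ := by
      have := hd₁ w₀
      nlinarith
    set y₀ : LinearMap.range f := f.rangeRestrict w₀ with hy₀
    have hny₀ : 0 < ‖y₀‖ := by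
      show 0 < ‖(y₀ : Y)‖
      exact hfw₀
    have hjy₀ : 0 < ‖j y₀‖ := by
      rcases lt_or_ge 0 ‖j y₀‖ with h | h
      · exact h
      · exfalso
        have h0 : ‖j y₀‖ = 0 := le_antisymm h (norm_nonneg _)
        have := hd₂ y₀
        rw [h0, mul_zero] at this
        exact absurd (le_antisymm this (norm_nonneg _)) (ne_of_gt hny₀)
    have hc₂pos : 0 < c₂ := by
      have := hc₂ y₀
      nlinarith
    have hd₂pos : 0 < d₂ := by
      have := hd₂ y₀
      nlinarith
    refine ⟨j ∘ₗ f.rangeRestrict, ?_, c₂ * c₁, d₁ * d₂, ?_, ?_, ?_⟩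
    · intro a b hab
      apply hf
      have : f.rangeRestrict a = f.rangeRestrict b := hj hab
      have := congrArg (Subtype.val) this
      exact this
    · intro w
      calc ‖j (f.rangeRestrict w)‖ ≤ c₂ * ‖f.rangeRestrict w‖ := hc₂ _
        _ = c₂ * ‖f w‖ := rfl
        _ ≤ c₂ * (c₁ * ‖w‖) := by
            exact mul_le_mul_of_nonneg_left (hc₁ w) (le_of_lt hc₂pos)
        _ = c₂ * c₁ * ‖w‖ := by ring
    · intro w
      calc ‖w‖ ≤ d₁ * ‖f w‖ := hd₁ w
        _ = d₁ * ‖f.rangeRestrict w‖ := rfl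
        _ ≤ d₁ * (d₂ * ‖j (f.rangeRestrict w)‖) :=
            mul_le_mul_of_nonneg_left (hd₂ _) (le_of_lt hd₁pos)
        _ = d₁ * d₂ * ‖(j ∘ₗ f.rangeRestrict) w‖ := by ring_nf; rfl
    · calc c₂ * c₁ * (d₁ * d₂) = c₁ * d₁ * (c₂ * d₂) := by ring
        _ ≤ c₁ * d₁ * (1 + δ) :=
            mul_le_mul_of_nonneg_left hcd₂ (le_of_lt (mul_pos hc₁pos hd₁pos))

/-- A finite-dimensional subspace of a space finitely representable in `X` is
finitely representable in `X`. -/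
lemma EcAux.finRep_submodule {X Y : Type} [NormedAddCommGroup X] [NormedSpace ℝ X]
    [NormedAddCommGroup Y] [NormedSpace ℝ Y]
    (hY : FinRep Y X) (T : Submodule ℝ Y) : FinRep (↥T) X := by
  intro S hS ε hε
  haveI := hS
  have hinj : Injective (T.subtype ∘ₗ S.subtype) :=
    T.injective_subtype.comp S.injective_subtype
  obtain ⟨g, hg, c, d, hc, hd, hcd⟩ := EcAux.emb_trans hY (T.subtype ∘ₗ S.subtype) hinj
    (c₁ := 1) (d₁ := 1) (fun w => by simp) (fun w => by simp) hε
  exact ⟨g, hg, c, d, hc, hd, by linarith⟩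

end EcAux
namespace EcAux

/-- Type synonym installing a seminorm as the norm. -/
def SN {V : Type} [AddCommGroup V] [Module ℝ V] (_p : Seminorm ℝ V) : Type := V

section SNinst

variable {V : Type} [AddCommGroup V] [Module ℝ V] (p : Seminorm ℝ V)

instance : SeminormedAddCommGroup (SN p) :=
  (p.toAddGroupSeminorm : AddGroupSeminorm V).toSeminormedAddCommGroup

instance : Module ℝ (SN p) := inferInstanceAs (Module ℝ V)

instance : NormedSpace ℝ (SN p) where
  norm_smul_le r v := by
    have := p.smul' r v
    exact le_of_eq this

/-- The identity map `V → SN p` as a linear map. -/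
def SN.of : V →ₗ[ℝ] SN p where
  toFun := id
  map_add' _ _ := rfl
  map_smul' _ _ := rfl

@[simp] lemma SN.norm_of (v : V) : ‖SN.of p v‖ = p v := rfl

lemma SN.of_surjective : Function.Surjective (SN.of p) := fun v => ⟨v, rfl⟩

/-- The identity map `SN p → V` as a linear map. -/
def SN.down : SN p →ₗ[ℝ] V where
  toFun := id
  map_add' _ _ := rfl
  map_smul' _ _ := rfl

@[simp] lemma SN.down_of (v : V) : SN.down p (SN.of p v) = v := rfl

@[simp] lemma SN.of_down (w : SN p) : SN.of p (SN.down p w) = w := rfl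

lemma SN.norm_eq (w : SN p) : ‖w‖ = p (SN.down p w) := rfl

end SNinst

end EcAux
namespace EcAux

open Function Filter UniformSpace Metric Set Finset

set_option maxHeartbeats 1000000
set_option synthInstance.maxHeartbeats 400000

variable {X V : Type} [NormedAddCommGroup X] [NormedSpace ℝ X]
  [AddCommGroup V] [Module ℝ V]

/-- If every finite-dimensional space mapping linearly into `SN p` admits approximate
realizations in spaces finitely representable in `X`, then the completion of `SN p`
is finitely representable in `X`. -/
lemma finrep_completion (p : Seminorm ℝ V)
    (H : ∀ (G : Submodule ℝ (Completion (SN p))), FiniteDimensional ℝ ↥G →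
      ∀ (L : ↥G →ₗ[ℝ] SN p) (δ : ℝ), 0 < δ →
        ∃ F : FDBanach, FinRep F.carrier X ∧
          ∃ Φ : ↥G →ₗ[ℝ] F.carrier, ∀ x : ↥G, |‖Φ x‖ - ‖L x‖| ≤ δ * ‖x‖) :
    FinRep (Completion (SN p)) X := by
  intro G' hG' ε hε
  haveI := hG'
  set m : ℝ := min ε 1 with hm
  have hm0 : 0 < m := lt_min hε one_pos
  have hm1 : m ≤ 1 := min_le_right _ _
  set e : ℝ := m / 16 with he
  have he0 : 0 < e := by positivity
  have he1 : e ≤ 1 / 16 := by rw [he]; linarith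
  -- basis of G'
  set n := Module.finrank ℝ ↥G'
  let b : Module.Basis (Fin n) ℝ ↥G' := Module.finBasis ℝ ↥G'
  -- coordinate functionals are bounded
  let cf : Fin n → (↥G' →L[ℝ] ℝ) := fun k => LinearMap.toContinuousLinearMap (b.coord k)
  set C : ℝ := (∑ k, ‖cf k‖) + 1 with hC
  have hCpos : 0 < C := by
    have : (0:ℝ) ≤ ∑ k, ‖cf k‖ := Finset.sum_nonneg fun k _ => ContinuousLinearMap.opNorm_nonneg _
    linarith
  -- approximate the basis vectors by elements of `SN p`
  have happrox : ∀ k : Fin n, ∃ q : SN p,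
      ‖((q : Completion (SN p))) - ((b k : ↥G') : Completion (SN p))‖ ≤ e / C := by
    intro k
    obtain ⟨q, hq⟩ := UniformSpace.Completion.denseRange_coe (α := SN p)
      |>.exists_dist_lt ((b k : ↥G') : Completion (SN p)) (show (0:ℝ) < e / C by positivity)
    refine ⟨q, ?_⟩
    rw [dist_comm, dist_eq_norm] at hq
    exact le_of_lt hq
  choose q hq using happrox
  -- the lift
  let L : ↥G' →ₗ[ℝ] SN p := ∑ k, (b.coord k).smulRight (q k)
  have hLapply : ∀ x : ↥G', L x = ∑ k, b.coord k x • q k := by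
    intro x
    simp [L, LinearMap.sum_apply]
  -- coordinate bound
  have hcoord : ∀ (k : Fin n) (x : ↥G'), |b.coord k x| ≤ ‖cf k‖ * ‖x‖ := by
    intro k x
    have := (cf k).le_opNorm x
    simpa [cf, Real.norm_eq_abs] using this
  -- approximation estimate
  have hkey : ∀ x : ↥G', |‖L x‖ - ‖x‖| ≤ e * ‖x‖ := by
    intro x
    have hxsum : ((x : Completion (SN p))) = ∑ k, b.coord k x • ((b k : ↥G') : Completion (SN p)) := by
      conv_lhs => rw [show (x : Completion (SN p)) = G'.subtype x from rfl, ← b.sum_repr x]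
      rw [map_sum]
      simp [Module.Basis.coord_apply]
    have hLsum : ((L x : SN p) : Completion (SN p)) =
        ∑ k, b.coord k x • ((q k : SN p) : Completion (SN p)) := by
      rw [hLapply]
      rw [show ((((∑ k, b.coord k x • q k : SN p)) : SN p) : Completion (SN p)) =
        (Completion.toComplₗᵢ (𝕜 := ℝ)).toLinearMap (∑ k, b.coord k x • q k) from rfl]
      rw [map_sum]
      simp [Completion.toComplₗᵢ]
      rfl
    have hdiff : ‖((L x : SN p) : Completion (SN p)) - (x : Completion (SN p))‖ ≤ e * ‖x‖ := by
      rw [hLsum, hxsum, ← Finset.sum_sub_distrib]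
      have : ∀ k ∈ Finset.univ (α := Fin n),
          ‖b.coord k x • ((q k : SN p) : Completion (SN p)) -
            b.coord k x • ((b k : ↥G') : Completion (SN p))‖ ≤ (‖cf k‖ * ‖x‖) * (e / C) := by
        intro k _
        rw [← smul_sub, norm_smul, Real.norm_eq_abs]
        exact mul_le_mul (hcoord k x) (hq k) (norm_nonneg _)
          (mul_nonneg (ContinuousLinearMap.opNorm_nonneg _) (norm_nonneg _))
      calc ‖∑ k, (b.coord k x • ((q k : SN p) : Completion (SN p)) -
              b.coord k x • ((b k : ↥G') : Completion (SN p)))‖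
          ≤ ∑ k, ‖b.coord k x • ((q k : SN p) : Completion (SN p)) -
              b.coord k x • ((b k : ↥G') : Completion (SN p))‖ := norm_sum_le _ _
        _ ≤ ∑ k, (‖cf k‖ * ‖x‖) * (e / C) := Finset.sum_le_sum this
        _ = (∑ k, ‖cf k‖) * ‖x‖ * (e / C) := by rw [← Finset.sum_mul, ← Finset.sum_mul]
        _ ≤ C * ‖x‖ * (e / C) := by
            have h1 : (∑ k, ‖cf k‖) ≤ C := by rw [hC]; linarith
            have : (0:ℝ) ≤ ‖x‖ * (e / C) := by positivity
            calc (∑ k, ‖cf k‖) * ‖x‖ * (e / C) = (∑ k, ‖cf k‖) * (‖x‖ * (e / C)) := by ring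
              _ ≤ C * (‖x‖ * (e / C)) := mul_le_mul_of_nonneg_right h1 this
              _ = C * ‖x‖ * (e / C) := by ring
        _ = e * ‖x‖ * (C / C) := by ring
        _ = e * ‖x‖ := by rw [div_self (ne_of_gt hCpos), mul_one]
    have hnorm1 : ‖L x‖ = ‖((L x : SN p) : Completion (SN p))‖ :=
      (Completion.norm_coe (L x)).symm
    have hnorm2 : ‖x‖ = ‖(x : Completion (SN p))‖ := rfl
    rw [hnorm1, hnorm2]
    exact le_trans (abs_norm_sub_norm_le _ _) hdiff
  -- apply the hypothesis
  obtain ⟨F, hF, Φ, hΦ⟩ := H G' hG' L e he0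
  -- combined two-sided bound
  have hup : ∀ x : ↥G', ‖Φ x‖ ≤ (1 + 2*e) * ‖x‖ := by
    intro x
    have h1 := abs_le.1 (hΦ x)
    have h2 := abs_le.1 (hkey x)
    nlinarith [norm_nonneg x]
  have hlow : ∀ x : ↥G', (1 - 2*e) * ‖x‖ ≤ ‖Φ x‖ := by
    intro x
    have h1 := abs_le.1 (hΦ x)
    have h2 := abs_le.1 (hkey x)
    nlinarith [norm_nonneg x]
  have h2e : 0 < 1 - 2*e := by linarith
  have hlow' : ∀ x : ↥G', ‖x‖ ≤ (1 - 2*e)⁻¹ * ‖Φ x‖ := by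
    intro x
    calc ‖x‖ = (1 - 2*e)⁻¹ * ((1 - 2*e) * ‖x‖) := by
          rw [← mul_assoc, inv_mul_cancel₀ (ne_of_gt h2e), one_mul]
      _ ≤ (1 - 2*e)⁻¹ * ‖Φ x‖ :=
          mul_le_mul_of_nonneg_left (hlow x) (le_of_lt (inv_pos.2 h2e))
  have hinj : Injective Φ := by
    intro a b hab
    have h0 : Φ (a - b) = 0 := by rw [map_sub, hab, sub_self]
    have := hlow' (a - b)
    rw [h0, norm_zero, mul_zero] at this
    have : a - b = 0 := norm_le_zero_iff.1 this
    exact sub_eq_zero.1 this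
  obtain ⟨g, hg, c, d, hc, hd, hcd⟩ := emb_trans hF Φ hinj hup hlow' he0
  refine ⟨g, hg, c, d, hc, hd, ?_⟩
  have hinv : (1 - 2*e) * (1 - 2*e)⁻¹ = 1 := mul_inv_cancel₀ (ne_of_gt h2e)
  have hfinal : (1 + 2*e) * (1 - 2*e)⁻¹ * (1 + e) ≤ 1 + m := by
    rw [← sub_nonneg]
    have expand : (1 + m) - (1 + 2*e) * (1 - 2*e)⁻¹ * (1 + e) =
        ((1 + m) * (1 - 2*e) - (1 + 2*e) * (1 + e)) * (1 - 2*e)⁻¹ := by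
      field_simp
    rw [expand]
    apply mul_nonneg _ (le_of_lt (inv_pos.2 h2e))
    have hme : m = 16 * e := by rw [he]; ring
    nlinarith
  calc c * d ≤ (1 + 2*e) * (1 - 2*e)⁻¹ * (1 + e) := hcd
    _ ≤ 1 + m := hfinal
    _ ≤ 1 + ε := by simp [hm, min_le_left]

end EcAux
namespace EcAux

open Function Filter UniformSpace Metric Set Topology

/-- Uniform approximation on the unit ball of a finite-dimensional space along an
ultrafilter, given equi-Lipschitz functions converging pointwise. -/
lemma ulim_uniform_approx {σ : Type} (𝒰 : Ultrafilter σ) {W : Type}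
    [NormedAddCommGroup W] [NormedSpace ℝ W] [FiniteDimensional ℝ W]
    (h : σ → W → ℝ) (q : W → ℝ) (K : ℝ) (hK0 : 0 ≤ K)
    (T : Set σ) (hT : T ∈ 𝒰)
    (hlip : ∀ s ∈ T, ∀ x y : W, |h s x - h s y| ≤ K * ‖x - y‖)
    (hqlip : ∀ x y : W, |q x - q y| ≤ K * ‖x - y‖)
    (htend : ∀ x : W, Tendsto (fun s => h s x) (𝒰 : Filter σ) (𝓝 (q x)))
    (δ : ℝ) (hδ : 0 < δ) :
    ∃ s ∈ T, ∀ x : W, ‖x‖ ≤ 1 → |h s x - q x| ≤ δ := by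
  set r : ℝ := δ / (3 * (K + 1)) with hr
  have hr0 : 0 < r := by positivity
  haveI : ProperSpace W := FiniteDimensional.proper_real W
  have hcompact : IsCompact (closedBall (0 : W) 1) := isCompact_closedBall _ _
  have hcover : closedBall (0 : W) 1 ⊆ ⋃ y : W, ball y r := by
    intro x _
    exact mem_iUnion.2 ⟨x, mem_ball_self hr0⟩
  obtain ⟨t, ht⟩ := hcompact.elim_finite_subcover (fun y : W => ball y r)
    (fun y => isOpen_ball) hcover
  have hmemnet : ∀ y : W, {s : σ | |h s y - q y| < δ / 3} ∈ 𝒰 := by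
    intro y
    have := Metric.tendsto_nhds.1 (htend y) (δ / 3) (by positivity)
    simp only [Real.dist_eq] at this
    exact this
  have hS : T ∩ ⋂ y ∈ t, {s : σ | |h s y - q y| < δ / 3} ∈ 𝒰 :=
    Filter.inter_mem hT ((Filter.biInter_mem t.finite_toSet).2 fun y _ => hmemnet y)
  obtain ⟨s, hsT, hsnet⟩ := Filter.nonempty_of_mem hS
  refine ⟨s, hsT, ?_⟩
  intro x hx
  have hxball : x ∈ closedBall (0 : W) 1 := by
    rw [mem_closedBall_zero_iff]; exact hx
  obtain ⟨y, hyt, hxy⟩ := mem_iUnion₂.1 (ht hxball)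
  have hdist : ‖x - y‖ < r := by
    rw [← dist_eq_norm]
    exact mem_ball.1 hxy
  have h1 : |h s x - h s y| ≤ K * ‖x - y‖ := hlip s hsT x y
  have h2 : |h s y - q y| < δ / 3 := by
    have := mem_iInter₂.1 hsnet y hyt
    exact this
  have h3 : |q y - q x| ≤ K * ‖y - x‖ := hqlip y x
  have hxy' : ‖y - x‖ = ‖x - y‖ := norm_sub_rev y x
  have hKr : K * ‖x - y‖ ≤ δ / 3 := by
    calc K * ‖x - y‖ ≤ K * r := mul_le_mul_of_nonneg_left (le_of_lt hdist) hK0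
      _ ≤ (K + 1) * r := by nlinarith
      _ = δ / 3 := by rw [hr]; field_simp
  calc |h s x - q x| = |(h s x - h s y) + (h s y - q y) + (q y - q x)| := by ring_nf
    _ ≤ |h s x - h s y| + |h s y - q y| + |q y - q x| := by
        exact le_trans (abs_add_le _ _) (by gcongr; exact abs_add_le _ _)
    _ ≤ δ / 3 + δ / 3 + δ / 3 := by
        rw [hxy'] at h3
        exact add_le_add (add_le_add (le_trans h1 hKr) (le_of_lt h2)) (le_trans h3 hKr)
    _ = δ := by ring

end EcAux
namespace EcAux

open Function Filter UniformSpace Metric Set Topology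

lemma homog_to_ec {X E : Type} [NormedAddCommGroup X] [NormedSpace ℝ X]
    [NormedAddCommGroup E] [NormedSpace ℝ E]
    (hHom : AlmostOmegaHomogeneousIn E X) : ExistentiallyClosedIn E X := by
  intro Z _ _ _ hZX _hXZ i A hA ε hε
  haveI := hA
  set iA : E →ₗ[ℝ] Z := i.toLinearMap with hiA
  have hiAinj : Injective iA := i.injective
  set A₀ : Submodule ℝ ↥A := Submodule.comap A.subtype (LinearMap.range iA) with hA₀
  let ieq : E ≃ₗ[ℝ] ↥(LinearMap.range iA) := LinearEquiv.ofInjective iA hiAinj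
  have hieq : ∀ y : ↥(LinearMap.range iA), iA (ieq.symm y) = (y : Z) := by
    intro y
    have := LinearEquiv.ofInjective_apply (h := hiAinj) iA (ieq.symm y)
    rw [show ieq (ieq.symm y) = y from ieq.apply_symm_apply y] at this
    exact this.symm
  -- the inverse isometry on `A₀`
  let ψ : ↥A₀ →ₗ[ℝ] ↥(LinearMap.range iA) :=
    LinearMap.codRestrict (LinearMap.range iA) (A.subtype ∘ₗ A₀.subtype) (fun a => a.2)
  have hψ : ∀ a : ↥A₀, (ψ a : Z) = ((a : ↥A) : Z) := fun a => rfl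
  let φ : ↥A₀ →ₗᵢ[ℝ] E :=
    { toLinearMap := ieq.symm.toLinearMap ∘ₗ ψ
      norm_map' := by
        intro a
        have h1 : iA (ieq.symm (ψ a)) = (ψ a : Z) := hieq (ψ a)
        have h2 : ‖iA (ieq.symm (ψ a))‖ = ‖ieq.symm (ψ a)‖ := i.norm_map _
        calc ‖(ieq.symm.toLinearMap ∘ₗ ψ) a‖ = ‖ieq.symm (ψ a)‖ := rfl
          _ = ‖iA (ieq.symm (ψ a))‖ := h2.symm
          _ = ‖(ψ a : Z)‖ := by rw [h1]
          _ = ‖a‖ := rfl }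
  have hφ : ∀ a : ↥A₀, iA (φ a) = ((a : ↥A) : Z) := by
    intro a
    calc iA (φ a) = iA (ieq.symm (ψ a)) := rfl
      _ = (ψ a : Z) := hieq (ψ a)
      _ = ((a : ↥A) : Z) := rfl
  -- apply homogeneity to `A` with distinguished subspace `A₀`
  obtain ⟨j, hjinj, hjext, c, d, hc, hd, hcd⟩ :=
    hHom ⟨↥A⟩ (finRep_submodule hZX A) A₀ φ ε hε
  refine ⟨iA ∘ₗ j, hiAinj.comp hjinj, ?_, ?_, c, d, ?_, ?_, hcd⟩
  · rintro _ ⟨a, rfl⟩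
    exact ⟨j a, rfl⟩
  · intro a ha
    have ha₀ : a ∈ A₀ := by
      rw [hA₀, Submodule.mem_comap]
      exact ha
    have := hjext ⟨a, ha₀⟩
    calc (iA ∘ₗ j) a = iA (j a) := rfl
      _ = iA (φ ⟨a, ha₀⟩) := by rw [show j ((⟨a, ha₀⟩ : ↥A₀) : ↥A) = φ ⟨a, ha₀⟩ from this]
      _ = (a : Z) := hφ ⟨a, ha₀⟩
  · intro a
    calc ‖(iA ∘ₗ j) a‖ = ‖iA (j a)‖ := rfl
      _ = ‖j a‖ := i.norm_map _
      _ ≤ c * ‖a‖ := hc a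
  · intro a
    calc ‖a‖ ≤ d * ‖j a‖ := hd a
      _ = d * ‖iA (j a)‖ := by rw [show ‖iA (j a)‖ = ‖j a‖ from i.norm_map _]
      _ = d * ‖(iA ∘ₗ j) a‖ := rfl

end EcAux
namespace EcAux

open Function Filter UniformSpace Metric Set Topology

set_option maxHeartbeats 2000000
set_option synthInstance.maxHeartbeats 400000

lemma ec_to_homog {X E : Type} [NormedAddCommGroup X] [NormedSpace ℝ X]
    [NormedAddCommGroup E] [NormedSpace ℝ E]
    (hamalg : AmalgamationProperty X) (hE₁ : FinRep E X) (hE₂ : FinRep X E)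
    (hEC : ExistentiallyClosedIn E X) : AlmostOmegaHomogeneousIn E X := by
  intro B hB A i ε hε
  classical
  set AIm : Submodule ℝ E := LinearMap.range i.toLinearMap with hAIm
  haveI : FiniteDimensional ℝ ↥AIm := inferInstance
  -- the directed index type of finite-dimensional subspaces of `E` above `AIm`
  let σ : Type := {s : Submodule ℝ E // AIm ≤ s ∧ FiniteDimensional ℝ ↥s}
  -- amalgamation data
  have key : ∀ s : σ, ∃ F : FDBanach, FinRep F.carrier X ∧
      ∃ (β : B.carrier →ₗᵢ[ℝ] F.carrier) (η : ↥s.1 →ₗᵢ[ℝ] F.carrier),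
        ∀ a : ↥A, β (a : B.carrier) = η ⟨i a, s.2.1 ⟨a, rfl⟩⟩ := by
    intro s
    haveI := s.2.2
    let i₂ : ↥A →ₗᵢ[ℝ] ↥s.1 :=
      { toLinearMap := LinearMap.codRestrict s.1 i.toLinearMap (fun a => s.2.1 ⟨a, rfl⟩)
        norm_map' := fun a => i.norm_map a }
    obtain ⟨F, hF, j₁, j₂, hj⟩ := hamalg ⟨↥A⟩ B ⟨↥s.1⟩
      (finRep_submodule hB A) hB (finRep_submodule hE₁ s.1) A.subtypeₗᵢ i₂
    exact ⟨F, hF, j₁, j₂, fun a => hj a⟩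
  choose F hF β η hβη using key
  -- ultrafilter on the directed set
  have hdir : Directed (fun (x1 x2 : Filter σ) => x1 ≥ x2)
      (fun s₀ : σ => Filter.principal {s : σ | s₀.1 ≤ s.1}) := by
    intro s₁ s₂
    haveI := s₁.2.2; haveI := s₂.2.2
    refine ⟨⟨s₁.1 ⊔ s₂.1, le_trans s₁.2.1 le_sup_left,
      Submodule.finiteDimensional_sup _ _⟩, ?_, ?_⟩
    · refine Filter.principal_mono.2 (fun s hs => ?_)
      simp only [Set.mem_setOf_eq] at hs ⊢
      exact le_trans le_sup_left hs
    · refine Filter.principal_mono.2 (fun s hs => ?_)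
      simp only [Set.mem_setOf_eq] at hs ⊢
      exact le_trans le_sup_right hs
  haveI hσne : Nonempty σ := ⟨⟨AIm, le_rfl, inferInstance⟩⟩
  haveI hbase : (⨅ s₀ : σ, Filter.principal {s : σ | s₀.1 ≤ s.1}).NeBot :=
    iInf_neBot_of_directed hdir
      (fun s₀ => Filter.principal_neBot_iff.2 ⟨s₀, show s₀.1 ≤ s₀.1 from le_rfl⟩)
  let 𝒰 : Ultrafilter σ := Ultrafilter.of (⨅ s₀ : σ, Filter.principal {s : σ | s₀.1 ≤ s.1})
  have h𝒰up : ∀ s₀ : σ, {s : σ | s₀.1 ≤ s.1} ∈ 𝒰 := fun s₀ =>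
    (Ultrafilter.of_le _) (Filter.mem_iInf_of_mem s₀ (Filter.mem_principal_self _))
  have h𝒰mem : ∀ e : E, {s : σ | e ∈ s.1} ∈ 𝒰 := by
    intro e
    haveI : FiniteDimensional ℝ ↥(Submodule.span ℝ {e}) := inferInstance
    haveI : FiniteDimensional ℝ ↥(AIm ⊔ Submodule.span ℝ {e}) :=
      Submodule.finiteDimensional_sup _ _
    refine Filter.mem_of_superset
      (h𝒰up ⟨AIm ⊔ Submodule.span ℝ {e}, le_sup_left, inferInstance⟩) ?_
    intro s hs
    simp only [Set.mem_setOf_eq] at hs ⊢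
    have h1 : e ∈ AIm ⊔ Submodule.span ℝ {e} :=
      Submodule.mem_sup_right (Submodule.mem_span_singleton_self e)
    exact hs h1
  -- the seminorm family
  set V := E × B.carrier with hV
  let ν : σ → V → ℝ := fun s v =>
    if h : v.1 ∈ s.1 then ‖η s ⟨v.1, h⟩ + β s v.2‖ else 0
  have hνbound : ∀ (s : σ) (v : V), ν s v ∈ Icc (0:ℝ) (‖v.1‖ + ‖v.2‖) := by
    intro s v
    constructor
    · by_cases h : v.1 ∈ s.1
      · rw [show ν s v = ‖η s ⟨v.1, h⟩ + β s v.2‖ from dif_pos h]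
        exact norm_nonneg _
      · rw [show ν s v = 0 from dif_neg h]
    · by_cases h : v.1 ∈ s.1
      · rw [show ν s v = ‖η s ⟨v.1, h⟩ + β s v.2‖ from dif_pos h]
        calc ‖η s ⟨v.1, h⟩ + β s v.2‖ ≤ ‖η s ⟨v.1, h⟩‖ + ‖β s v.2‖ := norm_add_le _ _
          _ = ‖(⟨v.1, h⟩ : ↥s.1)‖ + ‖v.2‖ := by rw [(η s).norm_map, (β s).norm_map]
          _ = ‖v.1‖ + ‖v.2‖ := rfl
      · rw [show ν s v = 0 from dif_neg h]
        positivity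
  have hνlim : ∀ v : V, ∃ L : ℝ, Filter.Tendsto (fun s => ν s v) (𝒰 : Filter σ) (𝓝 L) := by
    intro v
    have hle : (𝒰.map (fun s => ν s v) : Filter ℝ) ≤ Filter.principal (Icc 0 (‖v.1‖ + ‖v.2‖)) := by
      rw [Filter.le_principal_iff, Ultrafilter.mem_coe, Ultrafilter.mem_map]
      exact Filter.univ_mem' (fun s => hνbound s v)
    obtain ⟨L, _, hL⟩ := (isCompact_Icc (a := (0:ℝ)) (b := ‖v.1‖ + ‖v.2‖)).ultrafilter_le_nhds
      (𝒰.map (fun s => ν s v)) hle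
    exact ⟨L, hL⟩
  choose N hN using hνlim
  have hνval : ∀ (s : σ) (v : V) (h : v.1 ∈ s.1), ν s v = ‖η s ⟨v.1, h⟩ + β s v.2‖ :=
    fun s v h => dif_pos h
  -- basic properties of N
  have hNle : ∀ v : V, N v ≤ ‖v.1‖ + ‖v.2‖ := fun v =>
    le_of_tendsto (hN v) (Filter.Eventually.of_forall (fun s => (hνbound s v).2))
  have hN0le : ∀ v : V, 0 ≤ N v := fun v =>
    ge_of_tendsto (hN v) (Filter.Eventually.of_forall (fun s => (hνbound s v).1))
  have hNadd : ∀ v w : V, N (v + w) ≤ N v + N w := by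
    intro v w
    have hev : ∀ᶠ s in (𝒰 : Filter σ), ν s (v + w) ≤ ν s v + ν s w := by
      refine Filter.eventually_of_mem (Filter.inter_mem (h𝒰mem v.1) (h𝒰mem w.1)) ?_
      rintro s ⟨hv, hw⟩
      simp only [Set.mem_setOf_eq] at hv hw
      have hvw : (v + w).1 ∈ s.1 := Submodule.add_mem _ hv hw
      rw [hνval s (v + w) hvw, hνval s v hv, hνval s w hw]
      have hsub : (⟨(v + w).1, hvw⟩ : ↥s.1) = ⟨v.1, hv⟩ + ⟨w.1, hw⟩ := Subtype.ext rfl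
      have h2 : (v + w).2 = v.2 + w.2 := rfl
      rw [hsub, h2, map_add, map_add, add_add_add_comm]
      exact norm_add_le _ _
    exact le_of_tendsto_of_tendsto (hN (v + w)) ((hN v).add (hN w)) hev
  have hNsmul : ∀ (r : ℝ) (v : V), N (r • v) = |r| * N v := by
    intro r v
    have hev : (fun s => |r| * ν s v) =ᶠ[(𝒰 : Filter σ)] (fun s => ν s (r • v)) := by
      refine Filter.eventually_of_mem (h𝒰mem v.1) ?_
      intro s hv
      simp only [Set.mem_setOf_eq] at hv
      have hrv : (r • v).1 ∈ s.1 := Submodule.smul_mem _ _ hv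
      show |r| * ν s v = ν s (r • v)
      rw [hνval s (r • v) hrv, hνval s v hv]
      have hsub : (⟨(r • v).1, hrv⟩ : ↥s.1) = r • (⟨v.1, hv⟩ : ↥s.1) := Subtype.ext rfl
      have h2 : (r • v).2 = r • v.2 := rfl
      rw [hsub, h2, map_smul, map_smul, ← smul_add, norm_smul, Real.norm_eq_abs]
    exact tendsto_nhds_unique (hN (r • v))
      (Filter.Tendsto.congr' hev ((hN v).const_mul |r|))
  have hNzero : N 0 = 0 := by
    have h0 : ∀ s : σ, ν s (0 : V) = 0 := by
      intro s
      rw [hνval s 0 (Submodule.zero_mem _)]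
      have hsub : (⟨(0 : V).1, Submodule.zero_mem _⟩ : ↥s.1) = 0 := Subtype.ext rfl
      have h2 : (0 : V).2 = 0 := rfl
      rw [hsub, h2, map_zero, map_zero, add_zero, norm_zero]
    exact tendsto_nhds_unique (hN 0)
      (by rw [show (fun s => ν s (0 : V)) = (fun _ => (0:ℝ)) from funext h0]
          exact tendsto_const_nhds)
  have hNneg : ∀ v : V, N (-v) = N v := by
    intro v
    have hev : (fun s => ν s v) =ᶠ[(𝒰 : Filter σ)] (fun s => ν s (-v)) := by
      refine Filter.eventually_of_mem (h𝒰mem v.1) ?_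
      intro s hv
      simp only [Set.mem_setOf_eq] at hv
      have hnv : (-v).1 ∈ s.1 := Submodule.neg_mem _ hv
      show ν s v = ν s (-v)
      rw [hνval s (-v) hnv, hνval s v hv]
      have hsub : (⟨(-v).1, hnv⟩ : ↥s.1) = -(⟨v.1, hv⟩ : ↥s.1) := Subtype.ext rfl
      have h2 : (-v).2 = -v.2 := rfl
      rw [hsub, h2, map_neg, map_neg, ← neg_add, norm_neg]
    exact tendsto_nhds_unique (hN (-v)) (Filter.Tendsto.congr' hev (hN v))
  have hNE : ∀ e : E, N (e, 0) = ‖e‖ := by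
    intro e
    have hev : (fun _ : σ => ‖e‖) =ᶠ[(𝒰 : Filter σ)] (fun s => ν s (e, 0)) := by
      refine Filter.eventually_of_mem (h𝒰mem e) ?_
      intro s hv
      simp only [Set.mem_setOf_eq] at hv
      show ‖e‖ = ν s (e, 0)
      rw [hνval s (e, 0) hv]
      rw [show ((e, (0 : B.carrier)).2) = 0 from rfl, map_zero, add_zero, (η s).norm_map]
      rfl
    exact tendsto_nhds_unique (hN (e, 0)) (Filter.Tendsto.congr' hev tendsto_const_nhds)
  have hNB : ∀ b : B.carrier, N (0, b) = ‖b‖ := by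
    intro b
    have hev : (fun _ : σ => ‖b‖) =ᶠ[(𝒰 : Filter σ)] (fun s => ν s (0, b)) := by
      refine Filter.Eventually.of_forall ?_
      intro s
      show ‖b‖ = ν s (0, b)
      rw [hνval s (0, b) (Submodule.zero_mem _)]
      have hsub : (⟨((0 : E), b).1, Submodule.zero_mem _⟩ : ↥s.1) = 0 := Subtype.ext rfl
      rw [hsub, map_zero, zero_add, (β s).norm_map]
    exact tendsto_nhds_unique (hN (0, b)) (Filter.Tendsto.congr' hev tendsto_const_nhds)
  have hNglue : ∀ a : ↥A, N (i a, -((a : B.carrier))) = 0 := by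
    intro a
    have hev : (fun _ : σ => (0:ℝ)) =ᶠ[(𝒰 : Filter σ)] (fun s => ν s (i a, -((a : B.carrier)))) := by
      refine Filter.Eventually.of_forall ?_
      intro s
      have hm : (i a : E) ∈ s.1 := s.2.1 ⟨a, rfl⟩
      show (0:ℝ) = ν s (i a, -((a : B.carrier)))
      rw [hνval s (i a, -((a : B.carrier))) hm]
      have hsub : (⟨((i a : E), -((a : B.carrier))).1, hm⟩ : ↥s.1) = ⟨i a, s.2.1 ⟨a, rfl⟩⟩ :=
        Subtype.ext rfl
      rw [hsub, ← hβη s a]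
      rw [show (((i a : E), -((a : B.carrier))).2) = -((a : B.carrier)) from rfl]
      rw [map_neg, add_neg_cancel, norm_zero]
    exact tendsto_nhds_unique (hN _) (Filter.Tendsto.congr' hev tendsto_const_nhds)
  -- package as a seminorm
  let p : Seminorm ℝ V :=
    { toFun := N
      map_zero' := hNzero
      add_le' := hNadd
      neg' := hNneg
      smul' := fun r v => by
        show N (r • v) = ‖r‖ * N v
        rw [hNsmul, Real.norm_eq_abs] }
  have hpN : ∀ v : V, p v = N v := fun v => rfl
  -- the amalgamated superspace of `E`
  let Zc : Type := Completion (SN p)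
  let iZ : E →ₗᵢ[ℝ] Zc :=
    { toLinearMap := (Completion.toComplₗᵢ (𝕜 := ℝ) (E := SN p)).toLinearMap ∘ₗ
        ((SN.of p) ∘ₗ (LinearMap.inl ℝ E B.carrier))
      norm_map' := by
        intro e
        show ‖((SN.of p ((e, (0 : B.carrier)) : V) : SN p) : Completion (SN p))‖ = ‖e‖
        rw [Completion.norm_coe]
        show N ((e, (0 : B.carrier)) : V) = ‖e‖
        exact hNE e }
  let k : B.carrier →ₗᵢ[ℝ] Zc :=
    { toLinearMap := (Completion.toComplₗᵢ (𝕜 := ℝ) (E := SN p)).toLinearMap ∘ₗ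
        ((SN.of p) ∘ₗ (LinearMap.inr ℝ E B.carrier))
      norm_map' := by
        intro b
        show ‖((SN.of p (((0 : E), b) : V) : SN p) : Completion (SN p))‖ = ‖b‖
        rw [Completion.norm_coe]
        show N (((0 : E), b) : V) = ‖b‖
        exact hNB b }
  have hglue : ∀ a : ↥A, k ((a : B.carrier)) = iZ (i a) := by
    intro a
    have hsub : iZ (i a) - k ((a : B.carrier)) =
        ((SN.of p (((i a : E), -((a : B.carrier))) : V) : SN p) : Completion (SN p)) := by
      show ((SN.of p (((i a : E), (0 : B.carrier)) : V) : SN p) : Completion (SN p)) -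
          ((SN.of p (((0 : E), (a : B.carrier)) : V) : SN p) : Completion (SN p)) = _
      rw [← Completion.coe_sub, ← map_sub]
      have hv : (((i a : E), (0 : B.carrier)) : V) - (((0 : E), (a : B.carrier)) : V) =
          (((i a : E), -((a : B.carrier))) : V) := by
        rw [Prod.mk_sub_mk, sub_zero, zero_sub]
      rw [hv]
    have hz : iZ (i a) - k ((a : B.carrier)) = 0 := by
      have hnorm : ‖iZ (i a) - k ((a : B.carrier))‖ = 0 := by
        rw [hsub, Completion.norm_coe]
        show N (((i a : E), -((a : B.carrier))) : V) = 0
        exact hNglue a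
      exact norm_eq_zero.1 hnorm
    exact (sub_eq_zero.1 hz).symm
  have hXZ : FinRep X Zc := by
    intro S hS ε' hε'
    obtain ⟨j0, hj0, c, d, hc, hd, hcd⟩ := hE₂ S hS ε' hε'
    refine ⟨iZ.toLinearMap ∘ₗ j0, iZ.injective.comp hj0, c, d, ?_, ?_, hcd⟩
    · intro a
      calc ‖iZ (j0 a)‖ = ‖j0 a‖ := iZ.norm_map _
        _ ≤ c * ‖a‖ := hc a
    · intro a
      calc ‖a‖ ≤ d * ‖j0 a‖ := hd a
        _ = d * ‖iZ (j0 a)‖ := by rw [iZ.norm_map]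
  -- finite representability of the pushout in X
  have hZX : FinRep Zc X := by
    apply finrep_completion p
    intro G hG L δ hδ
    haveI := hG
    let L1 : ↥G →ₗ[ℝ] E := (LinearMap.fst ℝ E B.carrier) ∘ₗ ((SN.down p) ∘ₗ L)
    let L2 : ↥G →ₗ[ℝ] B.carrier := (LinearMap.snd ℝ E B.carrier) ∘ₗ ((SN.down p) ∘ₗ L)
    set K1 : ℝ := ‖LinearMap.toContinuousLinearMap L1‖ with hK1
    set K2 : ℝ := ‖LinearMap.toContinuousLinearMap L2‖ with hK2
    set K : ℝ := K1 + K2 with hK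
    have hK0 : 0 ≤ K :=
      add_nonneg (ContinuousLinearMap.opNorm_nonneg _) (ContinuousLinearMap.opNorm_nonneg _)
    have hKb : ∀ x : ↥G, ‖L1 x‖ + ‖L2 x‖ ≤ K * ‖x‖ := by
      intro x
      have h1 : ‖L1 x‖ ≤ K1 * ‖x‖ := (LinearMap.toContinuousLinearMap L1).le_opNorm x
      have h2 : ‖L2 x‖ ≤ K2 * ‖x‖ := (LinearMap.toContinuousLinearMap L2).le_opNorm x
      calc ‖L1 x‖ + ‖L2 x‖ ≤ K1 * ‖x‖ + K2 * ‖x‖ := add_le_add h1 h2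
        _ = K * ‖x‖ := by rw [hK]; ring
    haveI : FiniteDimensional ℝ ↥(LinearMap.range L1) := inferInstance
    haveI : FiniteDimensional ℝ ↥(AIm ⊔ LinearMap.range L1) :=
      Submodule.finiteDimensional_sup _ _
    let sE₁ : σ := ⟨AIm ⊔ LinearMap.range L1, le_sup_left, inferInstance⟩
    set T : Set σ := {s : σ | sE₁.1 ≤ s.1} with hTdef
    have hT : T ∈ 𝒰 := h𝒰up sE₁
    have hdown1 : ∀ x : ↥G, (SN.down p (L x)).1 = L1 x := fun x => rfl
    have hdown2 : ∀ x : ↥G, (SN.down p (L x)).2 = L2 x := fun x => rfl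
    have hmemL : ∀ s : σ, s ∈ T → ∀ x : ↥G, (SN.down p (L x)).1 ∈ s.1 := by
      intro s hs x
      rw [hdown1]
      exact hs (Submodule.mem_sup_right ⟨x, rfl⟩)
    have mkΦ : ∀ s : σ, s ∈ T → ∃ Φs : ↥G →ₗ[ℝ] (F s).carrier,
        ∀ x : ↥G, ν s (SN.down p (L x)) = ‖Φs x‖ := by
      intro s hs
      refine ⟨(η s).toLinearMap ∘ₗ (LinearMap.codRestrict s.1 L1 (fun x => by
          have := hmemL s hs x; rw [hdown1] at this; exact this)) +
        (β s).toLinearMap ∘ₗ L2, ?_⟩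
      intro x
      rw [hνval s _ (hmemL s hs x)]
      rfl
    set q : ↥G → ℝ := fun x => ‖L x‖ with hqdef
    have hqlip : ∀ x y : ↥G, |q x - q y| ≤ K * ‖x - y‖ := by
      intro x y
      calc |‖L x‖ - ‖L y‖| ≤ ‖L x - L y‖ := abs_norm_sub_norm_le _ _
        _ = ‖L (x - y)‖ := by rw [← map_sub]
        _ = N (SN.down p (L (x - y))) := rfl
        _ ≤ ‖(SN.down p (L (x - y))).1‖ + ‖(SN.down p (L (x - y))).2‖ := hNle _
        _ = ‖L1 (x - y)‖ + ‖L2 (x - y)‖ := by rw [hdown1, hdown2]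
        _ ≤ K * ‖x - y‖ := hKb (x - y)
    have hlip : ∀ s ∈ T, ∀ x y : ↥G,
        |ν s (SN.down p (L x)) - ν s (SN.down p (L y))| ≤ K * ‖x - y‖ := by
      intro s hs x y
      obtain ⟨Φs, hΦs⟩ := mkΦ s hs
      rw [hΦs x, hΦs y]
      calc |‖Φs x‖ - ‖Φs y‖| ≤ ‖Φs x - Φs y‖ := abs_norm_sub_norm_le _ _
        _ = ‖Φs (x - y)‖ := by rw [← map_sub]
        _ = ν s (SN.down p (L (x - y))) := (hΦs (x - y)).symm
        _ ≤ ‖(SN.down p (L (x - y))).1‖ + ‖(SN.down p (L (x - y))).2‖ := (hνbound _ _).2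
        _ = ‖L1 (x - y)‖ + ‖L2 (x - y)‖ := by rw [hdown1, hdown2]
        _ ≤ K * ‖x - y‖ := hKb (x - y)
    have htend : ∀ x : ↥G, Filter.Tendsto (fun s => ν s (SN.down p (L x)))
        (𝒰 : Filter σ) (𝓝 (q x)) := fun x => hN _
    obtain ⟨s₀, hs₀T, hs₀⟩ := ulim_uniform_approx 𝒰
      (fun s x => ν s (SN.down p (L x))) q K hK0 T hT hlip hqlip htend δ hδ
    obtain ⟨Φ, hΦ⟩ := mkΦ s₀ hs₀T
    refine ⟨F s₀, hF s₀, Φ, ?_⟩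
    intro x
    by_cases hx : x = 0
    · rw [hx]
      simp only [map_zero, norm_zero, sub_zero, abs_zero, mul_zero]
      exact le_refl 0
    · have hnx : 0 < ‖x‖ := norm_pos_iff.2 hx
      set u : ↥G := ‖x‖⁻¹ • x with hu
      have hu1 : ‖u‖ ≤ 1 := by
        rw [hu, norm_smul, Real.norm_eq_abs, abs_inv, abs_of_pos hnx]
        exact le_of_eq (inv_mul_cancel₀ (ne_of_gt hnx))
      have hball := hs₀ u hu1
      rw [show ν s₀ (SN.down p (L u)) = ‖Φ u‖ from hΦ u] at hball
      have h5 : ‖Φ u‖ = ‖x‖⁻¹ * ‖Φ x‖ := by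
        rw [hu, map_smul, norm_smul, Real.norm_eq_abs, abs_inv, abs_of_pos hnx]
      have h6 : q u = ‖x‖⁻¹ * q x := by
        rw [hqdef]
        show ‖L (‖x‖⁻¹ • x)‖ = ‖x‖⁻¹ * ‖L x‖
        rw [map_smul, norm_smul, Real.norm_eq_abs, abs_inv, abs_of_pos hnx]
      rw [h5, h6] at hball
      have hfac : ‖Φ x‖ - ‖L x‖ = ‖x‖ * (‖x‖⁻¹ * ‖Φ x‖ - ‖x‖⁻¹ * q x) := by
        rw [hqdef]
        show ‖Φ x‖ - ‖L x‖ = ‖x‖ * (‖x‖⁻¹ * ‖Φ x‖ - ‖x‖⁻¹ * ‖L x‖)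
        rw [mul_sub, ← mul_assoc, ← mul_assoc, mul_inv_cancel₀ (ne_of_gt hnx), one_mul, one_mul]
      calc |‖Φ x‖ - ‖L x‖| = ‖x‖ * |‖x‖⁻¹ * ‖Φ x‖ - ‖x‖⁻¹ * q x| := by
            rw [hfac, abs_mul, abs_of_pos hnx]
        _ ≤ ‖x‖ * δ := mul_le_mul_of_nonneg_left hball (norm_nonneg x)
        _ = δ * ‖x‖ := mul_comm _ _
  -- apply existential closedness to the image of `B` inside `Zc`
  set GB : Submodule ℝ Zc := LinearMap.range k.toLinearMap with hGBdef
  haveI : FiniteDimensional ℝ ↥GB := inferInstance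
  obtain ⟨u, huinj, hurange, hufix, c, d, hc, hd, hcd⟩ :=
    hEC Zc hZX hXZ iZ GB inferInstance ε hε
  have hiZinj : Injective iZ.toLinearMap := iZ.injective
  let ieq : E ≃ₗ[ℝ] ↥(LinearMap.range iZ.toLinearMap) :=
    LinearEquiv.ofInjective iZ.toLinearMap hiZinj
  have hieq : ∀ y : ↥(LinearMap.range iZ.toLinearMap),
      iZ.toLinearMap (ieq.symm y) = (y : Zc) := by
    intro y
    have := LinearEquiv.ofInjective_apply (h := hiZinj) iZ.toLinearMap (ieq.symm y)
    rw [show ieq (ieq.symm y) = y from ieq.apply_symm_apply y] at this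
    exact this.symm
  let kres : B.carrier →ₗ[ℝ] ↥GB := k.toLinearMap.rangeRestrict
  have hkres : ∀ b : B.carrier, ((kres b : Zc)) = k b := fun b => rfl
  let u' : ↥GB →ₗ[ℝ] ↥(LinearMap.range iZ.toLinearMap) :=
    LinearMap.codRestrict _ u (fun a => hurange ⟨a, rfl⟩)
  let j : B.carrier →ₗ[ℝ] E := ieq.symm.toLinearMap ∘ₗ (u' ∘ₗ kres)
  have hjval : ∀ b : B.carrier, iZ (j b) = u (kres b) := by
    intro b
    show iZ.toLinearMap (ieq.symm (u' (kres b))) = u (kres b)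
    rw [hieq]
    rfl
  have hjnorm : ∀ b : B.carrier, ‖j b‖ = ‖u (kres b)‖ := by
    intro b
    rw [← iZ.norm_map (j b), hjval b]
  have hkresnorm : ∀ b : B.carrier, ‖kres b‖ = ‖b‖ := by
    intro b
    show ‖(kres b : Zc)‖ = ‖b‖
    rw [hkres]
    exact k.norm_map b
  refine ⟨j, ?_, ?_, c, d, ?_, ?_, hcd⟩
  · intro b1 b2 h12
    have h0 : j (b1 - b2) = 0 := by rw [map_sub, h12, sub_self]
    have h1 : ‖kres (b1 - b2)‖ ≤ d * ‖u (kres (b1 - b2))‖ := hd _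
    rw [← hjnorm (b1 - b2), h0, norm_zero, mul_zero, hkresnorm] at h1
    have h2 : b1 - b2 = 0 := norm_le_zero_iff.1 h1
    exact sub_eq_zero.1 h2
  · intro a
    have hmemr : ((kres ((a : B.carrier)) : Zc)) ∈ LinearMap.range iZ.toLinearMap := by
      rw [hkres, hglue a]
      exact ⟨i a, rfl⟩
    have hfix := hufix (kres ((a : B.carrier))) hmemr
    apply hiZinj
    show iZ.toLinearMap (j ((a : B.carrier))) = iZ.toLinearMap (i a)
    calc iZ.toLinearMap (j ((a : B.carrier))) = u (kres ((a : B.carrier))) := hjval _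
      _ = ((kres ((a : B.carrier))) : Zc) := hfix
      _ = k ((a : B.carrier)) := hkres _
      _ = iZ (i a) := hglue a
  · intro b
    rw [hjnorm b]
    calc ‖u (kres b)‖ ≤ c * ‖kres b‖ := hc _
      _ = c * ‖b‖ := by rw [hkresnorm]
  · intro b
    calc ‖b‖ = ‖kres b‖ := (hkresnorm b).symm
      _ ≤ d * ‖u (kres b)‖ := hd _
      _ = d * ‖j b‖ := by rw [hjnorm]

end EcAux

/-- **Existentially closed = almost `ω`-homogeneous.**
Let `X^f` be a class of finite equivalence whose Minkowski base `𝔐(X^f)` has the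
amalgamation property.  Then a space `E ∈ X^f` is existentially closed in `X^f` if and
only if `E` is almost `ω`-homogeneous. -/
theorem existentiallyClosed_iff_almostOmegaHomogeneous
    (X : Type) [NormedAddCommGroup X] [NormedSpace ℝ X] [CompleteSpace X]
    (hamalg : AmalgamationProperty X)
    (E : Type) [NormedAddCommGroup E] [NormedSpace ℝ E] [CompleteSpace E]
    (hE₁ : FinRep E X) (hE₂ : FinRep X E) :
    ExistentiallyClosedIn E X ↔ AlmostOmegaHomogeneousIn E X :=
  ⟨fun hEC => EcAux.ec_to_homog hamalg hE₁ hE₂ hEC, fun hHom => EcAux.homog_to_ec hHom⟩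
end
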